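/- arXiv:2409.04570 — 6 statements merged into one kernel-verified Lean document; each statement's English description precedes it below -/
import Mathlib

section
/- Let v be a pseudo-valuation on a field F. Then there exist a non-trivial pseudo-absolute value |·| on F (i.e., one attaining at least one value outside {0,1,∞}) and a real constant c > 0 such that v(x) = -c·log|x| for all x ∈ F (with conventions -log 0 = ∞ and -log ∞ = -∞). -/
/-!
Put `|x| := exp (-v x / c)`. The axioms of `v` turn into `|0| = 0`, `|1| = 1`, multiplicativity
and `|x + y| ≤ exp (-min (v 2) 0 / c) · max |x| |y|`, and for `c` large the constant is at most
`2`. Artin's trick then gives the triangle inequality: expanding `(x + y)ⁿ` binomially and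
summing its `n + 1` terms with the weak inequality yields
`|x + y|ⁿ ≤ 4 (n + 1) (|x| + |y|)ⁿ`, and the factor `4 (n + 1)` is subexponential.
-/

open scoped ENNReal

/-- A pseudo-absolute value on a commutative ring `R`: a function `R → [0,∞]` with
`|0| = 0`, `|1| = 1`, `|x+y| ≤ |x|+|y|`, and `|xy| = |x|·|y|` whenever the product
`|x|·|y|` is defined (i.e. `{|x|,|y|} ≠ {0,∞}`). -/
def IsPseudoAbsValue {R : Type*} [CommRing R] (f : R → ℝ≥0∞) : Prop :=
  f 0 = 0 ∧ f 1 = 1 ∧ (∀ x y, f (x + y) ≤ f x + f y) ∧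
    ∀ x y, ¬((f x = 0 ∧ f y = ⊤) ∨ (f x = ⊤ ∧ f y = 0)) → f (x * y) = f x * f y

/-- A pseudo-valuation on a field `F`: a function `v : F → [-∞,∞]` attaining a value
outside `{-∞,0,∞}`, with `v 0 = ∞`, `v 1 = 0`, `v 2 ≠ -∞`, `v (xy) = v x + v y`
whenever the sum is defined (i.e. `{v x, v y} ≠ {-∞,∞}`), and
`v (x+y) ≥ min (v x) (v y) + min (v 2) 0`. -/
def IsPseudoValuation {F : Type*} [Field F] (v : F → EReal) : Prop :=
  (∃ x, v x ∉ ({⊥, 0, ⊤} : Set EReal)) ∧ v 0 = ⊤ ∧ v 1 = 0 ∧ v 2 ≠ ⊥ ∧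
    (∀ x y, ¬((v x = ⊥ ∧ v y = ⊤) ∨ (v x = ⊤ ∧ v y = ⊥)) → v (x * y) = v x + v y) ∧
    ∀ x y, min (v x) (v y) + min (v 2) 0 ≤ v (x + y)

open Filter Topology Finset

lemma le_of_forall_pow_le_mul_succ_mul_pow {a b C : ℝ} (hb : 0 ≤ b)
    (h : ∀ n : ℕ, a ^ n ≤ C * (n + 1) * b ^ n) : a ≤ b := by
  rcases hb.eq_or_lt with rfl | hb
  · simpa using h 1
  by_contra! hab
  have ht : 1 < a / b := (one_lt_div hb).2 hab
  have hlim : Tendsto (fun n : ℕ ↦ C * ((n : ℝ) ^ 1 / (a / b) ^ n + (n : ℝ) ^ 0 / (a / b) ^ n))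
      atTop (𝓝 (C * (0 + 0))) :=
    ((tendsto_pow_const_div_const_pow_of_one_lt 1 ht).add
      (tendsto_pow_const_div_const_pow_of_one_lt 0 ht)).const_mul C
  obtain ⟨n, hn⟩ := (hlim.eventually (gt_mem_nhds (by simp : C * (0 + 0) < 1))).exists
  have htn : 0 < (a / b) ^ n := pow_pos (by linarith) n
  have hpow : (a / b) ^ n ≤ C * (n + 1) := by
    rw [div_pow, div_le_iff₀ (pow_pos hb n)]
    exact h n
  rw [pow_one, pow_zero, ← add_div, ← mul_div_assoc, div_lt_one htn] at hn
  linarith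

namespace IsPseudoAbsValue

variable {R : Type*} [CommRing R] {f : R → ℝ≥0∞}

lemma apply_sum_le_two_pow_mul_sup (hf0 : f 0 = 0)
    (hadd : ∀ x y, f (x + y) ≤ 2 * max (f x) (f y)) {ι : Type*} [DecidableEq ι] (g : ι → R)
    (k : ℕ) {s : Finset ι} (hs : #s ≤ 2 ^ k) :
    f (∑ i ∈ s, g i) ≤ 2 ^ k * s.sup fun i ↦ f (g i) := by
  induction k generalizing s with
  | zero =>
    rcases Nat.le_one_iff_eq_zero_or_eq_one.1 hs with h | h
    · simp [card_eq_zero.1 h, hf0]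
    · obtain ⟨a, rfl⟩ := card_eq_one.1 h
      simp
  | succ k ih =>
    obtain ⟨t, hts, ht⟩ := exists_subset_card_eq (min_le_right (2 ^ k) #s)
    have hst : #(s \ t) ≤ 2 ^ k := by
      rw [card_sdiff_of_subset hts, ht, pow_succ] at *
      omega
    calc f (∑ i ∈ s, g i) = f (∑ i ∈ s \ t, g i + ∑ i ∈ t, g i) := by rw [sum_sdiff hts]
      _ ≤ 2 * max (2 ^ k * (s \ t).sup fun i ↦ f (g i)) (2 ^ k * t.sup fun i ↦ f (g i)) :=
        (hadd _ _).trans (by gcongr; exacts [ih hst, ih (ht ▸ min_le_left _ _)])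
      _ ≤ 2 * (2 ^ k * s.sup fun i ↦ f (g i)) := by
        gcongr
        exact max_le (by gcongr; exact sdiff_subset) (by gcongr)
      _ = 2 ^ (k + 1) * s.sup fun i ↦ f (g i) := by ring

lemma apply_sum_le_two_mul_card_mul_sup (hf0 : f 0 = 0)
    (hadd : ∀ x y, f (x + y) ≤ 2 * max (f x) (f y)) {ι : Type*} [DecidableEq ι] (g : ι → R)
    (s : Finset ι) : f (∑ i ∈ s, g i) ≤ 2 * #s * s.sup fun i ↦ f (g i) := by
  rcases s.eq_empty_or_nonempty with rfl | hs
  · simp [hf0]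
  have hcard : 2 ^ (Nat.log 2 #s + 1) ≤ 2 * #s := by
    rw [pow_succ, mul_comm]
    exact Nat.mul_le_mul_left 2 (Nat.pow_log_le_self 2 hs.card_ne_zero)
  calc f (∑ i ∈ s, g i) ≤ 2 ^ (Nat.log 2 #s + 1) * s.sup fun i ↦ f (g i) :=
        apply_sum_le_two_pow_mul_sup hf0 hadd g _ (Nat.lt_pow_succ_log_self one_lt_two _).le
    _ ≤ 2 * #s * s.sup fun i ↦ f (g i) := by gcongr; exact_mod_cast hcard

lemma apply_mul_natCast_le (hf0 : f 0 = 0) (hadd : ∀ x y, f (x + y) ≤ 2 * max (f x) (f y))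
    (z : R) (n : ℕ) : f (z * n) ≤ 2 * n * f z := by
  have h := apply_sum_le_two_mul_card_mul_sup hf0 hadd (fun _ ↦ z) (range n)
  rw [sum_const, card_range, nsmul_eq_mul, mul_comm] at h
  exact h.trans (by gcongr; exact sup_const_le)

lemma apply_pow_of_ne_top (hf1 : f 1 = 1)
    (hmul : ∀ x y, f x ≠ ⊤ → f y ≠ ⊤ → f (x * y) = f x * f y) {z : R} (hz : f z ≠ ⊤) (n : ℕ) :
    f (z ^ n) = f z ^ n := by
  induction n with
  | zero => simpa using hf1
  | succ n ih => rw [pow_succ, hmul _ _ (ih ▸ ENNReal.pow_ne_top hz) hz, ih, pow_succ]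

lemma apply_add_pow_le (hf0 : f 0 = 0) (hf1 : f 1 = 1)
    (hmul : ∀ x y, f x ≠ ⊤ → f y ≠ ⊤ → f (x * y) = f x * f y)
    (hadd : ∀ x y, f (x + y) ≤ 2 * max (f x) (f y)) {x y : R} (hx : f x ≠ ⊤) (hy : f y ≠ ⊤)
    (n : ℕ) : f ((x + y) ^ n) ≤ 4 * (n + 1) * (f x + f y) ^ n := by
  have hterm : ∀ k ∈ range (n + 1),
      f (x ^ k * y ^ (n - k) * n.choose k) ≤ 2 * (f x + f y) ^ n := by
    intro k hk
    calc f (x ^ k * y ^ (n - k) * n.choose k)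
        ≤ 2 * n.choose k * f (x ^ k * y ^ (n - k)) := apply_mul_natCast_le hf0 hadd _ _
      _ = 2 * (f x ^ k * f y ^ (n - k) * n.choose k) := by
        have hpx := apply_pow_of_ne_top hf1 hmul hx
        have hpy := apply_pow_of_ne_top hf1 hmul hy
        rw [hmul _ _ (by rw [hpx]; exact ENNReal.pow_ne_top hx)
          (by rw [hpy]; exact ENNReal.pow_ne_top hy), hpx, hpy]
        ring
      _ ≤ 2 * (f x + f y) ^ n := by
        rw [add_pow]
        gcongr
        exact single_le_sum (f := fun k ↦ f x ^ k * f y ^ (n - k) * n.choose k)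
          (fun _ _ ↦ zero_le) hk
  calc f ((x + y) ^ n) ≤ 2 * #(range (n + 1)) *
        (range (n + 1)).sup fun k ↦ f (x ^ k * y ^ (n - k) * n.choose k) := by
        rw [add_pow]; exact apply_sum_le_two_mul_card_mul_sup hf0 hadd _ _
    _ ≤ 2 * (n + 1) * (2 * (f x + f y) ^ n) := by
        rw [card_range]; push_cast; gcongr; exact Finset.sup_le hterm
    _ = 4 * (n + 1) * (f x + f y) ^ n := by ring

lemma apply_add_le (hf0 : f 0 = 0) (hf1 : f 1 = 1)
    (hmul : ∀ x y, f x ≠ ⊤ → f y ≠ ⊤ → f (x * y) = f x * f y)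
    (hadd : ∀ x y, f (x + y) ≤ 2 * max (f x) (f y)) (x y : R) : f (x + y) ≤ f x + f y := by
  rcases eq_or_ne (f x) ⊤ with hx | hx
  · simp [hx]
  rcases eq_or_ne (f y) ⊤ with hy | hy
  · simp [hy]
  have hxy : f (x + y) ≠ ⊤ := ne_top_of_le_ne_top (by finiteness) (hadd x y)
  refine (ENNReal.toReal_le_toReal hxy (by finiteness)).1
    (le_of_forall_pow_le_mul_succ_mul_pow (C := 4) ENNReal.toReal_nonneg fun n ↦ ?_)
  have h := apply_add_pow_le hf0 hf1 hmul hadd hx hy n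
  rw [apply_pow_of_ne_top hf1 hmul hxy] at h
  simpa [ENNReal.toReal_add] using ENNReal.toReal_mono (by finiteness) h

theorem of_add_le_two_mul_max (hf0 : f 0 = 0) (hf1 : f 1 = 1)
    (hmul : ∀ x y, ¬((f x = 0 ∧ f y = ⊤) ∨ (f x = ⊤ ∧ f y = 0)) → f (x * y) = f x * f y)
    (hadd : ∀ x y, f (x + y) ≤ 2 * max (f x) (f y)) : IsPseudoAbsValue f :=
  ⟨hf0, hf1, apply_add_le hf0 hf1 (fun x y hx hy ↦ hmul x y (by simp [hx, hy])) hadd, hmul⟩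

end IsPseudoAbsValue

lemma EReal.add_mul_coe {x y : EReal} (h : ¬((x = ⊥ ∧ y = ⊤) ∨ (x = ⊤ ∧ y = ⊥))) (r : ℝ) :
    (x + y) * r = x * r + y * r := by
  rcases lt_trichotomy r 0 with hr | rfl | hr
  · induction x <;> induction y <;> simp_all [EReal.bot_mul_coe_of_neg hr,
      EReal.top_mul_coe_of_neg hr, ← EReal.coe_mul, ← EReal.coe_add, add_mul]
  · simp
  · exact EReal.right_distrib_of_nonneg_of_ne_top (EReal.coe_nonneg.2 hr.le)
      (EReal.coe_ne_top r) x y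

lemma EReal.add_div_coe {x y : EReal} (h : ¬((x = ⊥ ∧ y = ⊤) ∨ (x = ⊤ ∧ y = ⊥))) (r : ℝ) :
    (x + y) / r = x / r + y / r := by
  simp only [div_eq_mul_inv, ← EReal.coe_inv, EReal.add_mul_coe h]

lemma EReal.strictAnti_exp_div_neg {c : ℝ} (hc : 0 < c) :
    StrictAnti fun w : EReal ↦ EReal.exp (w / (-c : ℝ)) :=
  EReal.exp_strictMono.comp_strictAnti
    (EReal.strictAnti_div_right_of_neg (by exact_mod_cast neg_neg_of_pos hc) (EReal.coe_ne_bot _))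

lemma EReal.exp_div_neg_notMem {c : ℝ} (hc : 0 < c) {w : EReal} (hw : w ∉ ({⊥, 0, ⊤} : Set EReal)) :
    EReal.exp (w / (-c : ℝ)) ∉ ({0, 1, ⊤} : Set ℝ≥0∞) := by
  simp only [Set.mem_insert_iff, Set.mem_singleton_iff, not_or] at hw ⊢
  obtain ⟨hbot, hzero, htop⟩ := hw
  lift w to ℝ using ⟨htop, hbot⟩
  rw [← EReal.coe_div, EReal.exp_coe]
  simpa [Real.exp_pos, hc.ne'] using hzero

lemma exists_exp_div_neg_le_two {m : EReal} (hm_bot : m ≠ ⊥) (hm : m ≤ 0) :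
    ∃ c : ℝ, 0 < c ∧ EReal.exp (m / (-c : ℝ)) ≤ 2 := by
  lift m to ℝ using ⟨ne_top_of_le_ne_top EReal.zero_ne_top hm, hm_bot⟩
  have hm : m ≤ 0 := by exact_mod_cast hm
  have hlog : 0 < Real.log 2 := Real.log_pos one_lt_two
  have hc : 0 < 1 - m / Real.log 2 := by
    have := div_nonpos_of_nonpos_of_nonneg hm hlog.le; linarith
  refine ⟨1 - m / Real.log 2, hc, ?_⟩
  rw [← EReal.coe_div, EReal.exp_coe, ← ENNReal.ofReal_ofNat 2,
    ENNReal.ofReal_le_ofReal_iff zero_le_two, ← Real.le_log_iff_exp_le two_pos,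
    div_le_iff_of_neg (neg_neg_of_pos hc), mul_neg, mul_sub, mul_one, mul_div_cancel₀ _ hlog.ne']
  linarith

theorem IsPseudoValuation.isPseudoAbsValue_exp_div_neg {F : Type*} [Field F] {v : F → EReal}
    (hv : IsPseudoValuation v) {c : ℝ} (hc : 0 < c)
    (h2 : EReal.exp (min (v 2) 0 / (-c : ℝ)) ≤ 2) :
    IsPseudoAbsValue fun x ↦ EReal.exp (v x / (-c : ℝ)) := by
  obtain ⟨-, hv0, hv1, hv2, hmul, hadd⟩ := hv
  set g : EReal → ℝ≥0∞ := fun w ↦ EReal.exp (w / (-c : ℝ))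
  have hg : StrictAnti g := EReal.strictAnti_exp_div_neg hc
  have hg_top : g ⊤ = 0 := by simp [g, EReal.top_div_of_neg_ne_bot, hc]
  have hg_bot : g ⊥ = ⊤ := by simp [g, EReal.bot_div_of_neg_ne_bot, hc]
  have hg_add : ∀ {w w' : EReal}, ¬((w = ⊥ ∧ w' = ⊤) ∨ (w = ⊤ ∧ w' = ⊥)) →
      g (w + w') = g w * g w' := fun h ↦ by simp only [g, EReal.add_div_coe h, EReal.exp_add]
  refine IsPseudoAbsValue.of_add_le_two_mul_max ?_ ?_ (fun x y h ↦ ?_) (fun x y ↦ ?_)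
  · change g (v 0) = 0
    rw [hv0, hg_top]
  · simp [hv1]
  · change ¬((g (v x) = 0 ∧ g (v y) = ⊤) ∨ (g (v x) = ⊤ ∧ g (v y) = 0)) at h
    rw [← hg_top, ← hg_bot] at h
    simp only [hg.injective.eq_iff] at h
    change g (v (x * y)) = g (v x) * g (v y)
    rw [hmul x y (by tauto), hg_add (by tauto)]
  · have hm : min (v 2) 0 ≠ ⊥ ∧ min (v 2) 0 ≠ ⊤ :=
      ⟨by simp [hv2], ne_top_of_le_ne_top EReal.zero_ne_top (min_le_right _ _)⟩
    calc g (v (x + y)) ≤ g (min (v x) (v y) + min (v 2) 0) := hg.antitone (hadd x y)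
      _ = max (g (v x)) (g (v y)) * g (min (v 2) 0) := by
        rw [hg_add (by tauto), hg.antitone.map_min]
      _ ≤ 2 * max (g (v x)) (g (v y)) := by rw [mul_comm]; gcongr

/-- Every pseudo-valuation `v` on a field `F` is of the form `v = -c·log|·|` for some
non-trivial pseudo-absolute value `|·|` on `F` and some real constant `c > 0` (with the
conventions `-log 0 = ∞` and `-log ∞ = -∞`). -/
theorem pseudoValuation_eq_neg_log_pseudoAbsValue {F : Type*} [Field F]
    (v : F → EReal) (hv : IsPseudoValuation v) :
    ∃ (f : F → ℝ≥0∞) (c : ℝ), IsPseudoAbsValue f ∧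
      (∃ x, f x ∉ ({0, 1, ⊤} : Set ℝ≥0∞)) ∧ 0 < c ∧
      ∀ x, v x = (-(c : EReal)) * ENNReal.log (f x) := by
  have ⟨⟨x₀, hx₀⟩, _, _, hv2, _⟩ := hv
  obtain ⟨c, hc, h2⟩ := exists_exp_div_neg_le_two (m := min (v 2) 0) (by simp [hv2])
    (min_le_right _ _)
  refine ⟨fun x ↦ EReal.exp (v x / (-c : ℝ)), c, hv.isPseudoAbsValue_exp_div_neg hc h2,
    ⟨x₀, EReal.exp_div_neg_notMem hc hx₀⟩, hc, fun x ↦ ?_⟩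
  rw [EReal.log_exp, ← EReal.coe_neg, EReal.mul_div_cancel (EReal.coe_ne_bot _)
    (EReal.coe_ne_top _) (by exact_mod_cast neg_ne_zero.2 hc.ne')]
end

section
/- Let h be a height on a field F. Then h is invariant under duplication of coordinates, addition of zero coordinates, and multiplication of a coordinate by a root of unity: for every tuple ξ ∈ Fⁿ, every x ∈ F, and every root of unity λ ∈ F×, one has h(ξ,x,x) = h(ξ,x,0) = h(ξ,λx) = h(ξ,x). -/
/-- The Segre product of two tuples: all pairwise products, indexed by `Fin (n * m)`. -/
def segreProd {F : Type*} [Field F] {n m : ℕ} (x : Fin n → F) (y : Fin m → F) :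
    Fin (n * m) → F :=
  fun k => x (finProdFinEquiv.symm k).1 * y (finProdFinEquiv.symm k).2

/-- A height on a field `F` with Archimedean error `e ≥ 0`: a function assigning to
every nonempty tuple over `F` a value in `ℝ ∪ {-∞}`, satisfying: height of zero,
height of one, invariance under permutations, additivity for Segre products,
monotonicity under extending tuples, and the triangle inequality with error `e`. -/
def IsHeight {F : Type*} [Field F] (h : ∀ n : ℕ, (Fin n → F) → WithBot ℝ) (e : ℝ) : Prop :=
  0 ≤ e ∧
  (∀ n, 0 < n → ∀ x : Fin n → F, (h n x = ⊥ ↔ x = 0)) ∧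
  h 2 ![1, 1] = 0 ∧
  (∀ n (σ : Equiv.Perm (Fin n)) (x : Fin n → F), h n (x ∘ σ) = h n x) ∧
  (∀ n m, 0 < n → 0 < m → ∀ (x : Fin n → F) (y : Fin m → F),
    h (n * m) (segreProd x y) = h n x + h m y) ∧
  (∀ n m, 0 < n → 0 < m → ∀ (x : Fin n → F) (y : Fin m → F),
    h n x ≤ h (n + m) (Fin.append x y)) ∧
  (∀ n, 0 < n → ∀ x y : Fin n → F,
    h n (x + y) ≤ h (n + n) (Fin.append x y) + (e : WithBot ℝ))

/-!
A height depends only on the multiset `s` of entries of a tuple; call this value `H(s)`.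
The Segre product with `(1, μ)` gives `H(s + μ • s) = H(s) + h(1, μ)`. For `μ = 1` this reads
`H(s + s) = H(s)`, so by monotonicity adjoining an entry that is already present does not
change `H`. The multiset of powers of a root of unity `μ` is stable under multiplication by
`μ`, whence `h(1, μ) = 0`; similarly `h(1, 0) = 0` because `{1, 0} + {0, 0}` only repeats
entries of `{1, 0}`. Now `0 ::ₘ s ≤ s + 0 • s` and `μa ::ₘ s ≤ (a ::ₘ s) + μ • (a ::ₘ s)`
bound `H` from above; the reverse inequalities are monotonicity and, for `μ`, the same bound
applied to `μ⁻¹ = μ ^ (k - 1)`.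
-/

open Finset

theorem Fintype.exists_perm_comp_eq_of_map_univ_eq {ι α : Type*} [Fintype ι] {x y : ι → α}
    (hxy : univ.val.map x = univ.val.map y) : ∃ σ : Equiv.Perm ι, y ∘ σ = x := by
  classical
  have hcard (a : α) : Fintype.card {i // x i = a} = Fintype.card {i // y i = a} := by
    simpa [Fintype.card_subtype, Finset.card, Multiset.count_map, eq_comm]
      using congrArg (Multiset.count a) hxy
  exact ⟨.ofFiberEquiv fun a => Fintype.equivOfCardEq (hcard a),
    funext (Equiv.ofFiberEquiv_map _)⟩

theorem Fin.map_univ_val_append {α : Type*} {n m : ℕ} (x : Fin n → α) (y : Fin m → α) :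
    univ.val.map (Fin.append x y) = univ.val.map x + univ.val.map y := by
  simp [Fin.univ_val_map, List.ofFn_fin_append]

theorem Multiset.map_univ_val_get_toList {α : Type*} (s : Multiset α) :
    univ.val.map s.toList.get = s := by
  rw [Fin.univ_val_map, List.ofFn_get, Multiset.coe_toList]

theorem IsOfFinOrder.exists_one_mem_map_mul_eq_self {M : Type*} [Monoid M] {x : M}
    (hx : IsOfFinOrder x) : ∃ s : Multiset M, 1 ∈ s ∧ s.map (· * x) = s := by
  have : NeZero (orderOf x) := ⟨hx.orderOf_pos.ne'⟩
  refine ⟨univ.val.map fun j : ZMod (orderOf x) => x ^ j.val,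
    Multiset.mem_map.2 ⟨0, mem_univ _, by simp⟩, ?_⟩
  have hshift : (· * x) ∘ (fun j : ZMod (orderOf x) => x ^ j.val)
      = (fun j => x ^ j.val) ∘ Equiv.addRight 1 := by
    funext j
    simp only [Function.comp_apply, Equiv.coe_addRight, ← pow_succ, ZMod.val_add,
      ZMod.val_one_eq_one_mod, Nat.add_mod_mod, pow_mod_orderOf]
  rw [Multiset.map_map, hshift, ← Multiset.map_map, Multiset.map_univ_val_equiv]

theorem map_univ_val_segreProd {F : Type*} [Field F] {n m : ℕ} (x : Fin n → F)
    (y : Fin m → F) : univ.val.map (segreProd x y) =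
      (univ.val.map x).bind fun a => (univ.val.map y).map (a * ·) := by
  have hprod : segreProd x y = (fun p : Fin n × Fin m => x p.1 * y p.2) ∘ finProdFinEquiv.symm :=
    rfl
  rw [hprod, ← Multiset.map_map, Multiset.map_univ_val_equiv, ← Finset.univ_product_univ,
    Finset.product_val]
  simp only [SProd.sprod, Multiset.product, Multiset.map_bind, Multiset.bind_map,
    Multiset.map_map, Function.comp_def]

theorem map_univ_val_segreProd_pair_one {F : Type*} [Field F] {n : ℕ} (x : Fin n → F) (μ : F) :
    univ.val.map (segreProd x ![1, μ]) = univ.val.map x + (univ.val.map x).map (· * μ) := by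
  rw [map_univ_val_segreProd]
  change Multiset.bind _ (fun a => Multiset.map _ {1, μ}) = _
  simp only [Multiset.insert_eq_cons, Multiset.map_cons, Multiset.map_singleton, mul_one,
    Multiset.bind_cons, Multiset.bind_singleton, Multiset.map_id', mul_comm]

theorem WithBot.eq_zero_of_add_right_eq_self {α : Type*} [AddMonoid α] [IsLeftCancelAdd α]
    {a b : WithBot α} (ha : a ≠ ⊥) (hab : a + b = a) : b = 0 :=
  (WithBot.add_left_inj ha).1 (hab.trans (add_zero a).symm)

-- For a height the enumeration chosen by `Multiset.toList` is irrelevant (permutation invariance).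
noncomputable def multisetHeight {F : Type*} [Field F]
    (h : ∀ n : ℕ, (Fin n → F) → WithBot ℝ) (s : Multiset F) : WithBot ℝ :=
  h s.toList.length s.toList.get

namespace IsHeight

variable {F : Type*} [Field F] {h : ∀ n : ℕ, (Fin n → F) → WithBot ℝ} {e : ℝ}

theorem apply_eq_of_map_univ_val_eq (hh : IsHeight h e) {n m : ℕ} {x : Fin n → F}
    {y : Fin m → F} (hxy : univ.val.map x = univ.val.map y) : h n x = h m y := by
  obtain rfl : n = m := by simpa using congrArg Multiset.card hxy
  obtain ⟨σ, rfl⟩ := Fintype.exists_perm_comp_eq_of_map_univ_eq hxy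
  obtain ⟨-, -, -, hperm, -⟩ := hh
  exact hperm n σ y

theorem apply_eq_multisetHeight (hh : IsHeight h e) {n : ℕ} (x : Fin n → F) :
    h n x = multisetHeight h (univ.val.map x) :=
  hh.apply_eq_of_map_univ_val_eq (Multiset.map_univ_val_get_toList _).symm

theorem multisetHeight_ne_bot (hh : IsHeight h e) {s : Multiset F} {a : F} (ha : a ∈ s)
    (ha0 : a ≠ 0) : multisetHeight h s ≠ ⊥ := by
  rw [← s.map_univ_val_get_toList] at ha
  obtain ⟨i, -, rfl⟩ := Multiset.mem_map.1 ha
  obtain ⟨-, hbot_iff, -⟩ := hh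
  exact fun hbot => ha0 (congrFun ((hbot_iff _ i.pos _).1 hbot) i)

theorem multisetHeight_mono (hh : IsHeight h e) {s t : Multiset F} (hs : s ≠ 0) (hst : s ≤ t) :
    multisetHeight h s ≤ multisetHeight h t := by
  obtain ⟨r, rfl⟩ := Multiset.le_iff_exists_add.1 hst
  rcases eq_or_ne r 0 with rfl | hr
  · rw [add_zero]
  have hle := hh.2.2.2.2.2.1 _ _ (by simpa [Multiset.card_pos] using hs)
    (by simpa [Multiset.card_pos] using hr) s.toList.get r.toList.get
  rwa [hh.apply_eq_multisetHeight (Fin.append _ _), Fin.map_univ_val_append,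
    Multiset.map_univ_val_get_toList, Multiset.map_univ_val_get_toList] at hle

theorem multisetHeight_add_map_mul (hh : IsHeight h e) {s : Multiset F} (hs : s ≠ 0) (μ : F) :
    multisetHeight h (s + s.map (· * μ)) = multisetHeight h s + h 2 ![1, μ] := by
  have hsegre := hh.2.2.2.2.1 _ 2 (by simpa [Multiset.card_pos] using hs) two_pos
    s.toList.get ![1, μ]
  rwa [hh.apply_eq_multisetHeight, map_univ_val_segreProd_pair_one,
    Multiset.map_univ_val_get_toList] at hsegre

theorem multisetHeight_le_of_le_add_map_mul (hh : IsHeight h e) {s t : Multiset F} {μ : F}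
    (ht : t ≠ 0) (hts : t ≤ s + s.map (· * μ)) :
    multisetHeight h t ≤ multisetHeight h s + h 2 ![1, μ] := by
  have hs : s ≠ 0 := by
    rintro rfl
    simp_all
  exact (hh.multisetHeight_mono ht hts).trans_eq (hh.multisetHeight_add_map_mul hs μ)

theorem multisetHeight_add_self (hh : IsHeight h e) {s : Multiset F} (hs : s ≠ 0) :
    multisetHeight h (s + s) = multisetHeight h s := by
  simpa [hh.2.2.1] using hh.multisetHeight_add_map_mul hs 1

theorem multisetHeight_cons_of_mem (hh : IsHeight h e) {s : Multiset F} {a : F} (ha : a ∈ s) :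
    multisetHeight h (a ::ₘ s) = multisetHeight h s := by
  have hs : s ≠ 0 := ne_of_mem_of_not_mem' ha (Multiset.notMem_zero a)
  refine le_antisymm ?_ (hh.multisetHeight_mono hs (Multiset.le_cons_self s a))
  calc multisetHeight h (a ::ₘ s) ≤ multisetHeight h (s + s) :=
        hh.multisetHeight_mono Multiset.cons_ne_zero
          (by
            rw [← Multiset.singleton_add]
            exact add_le_add_left (Multiset.singleton_le.2 ha) s)
    _ = multisetHeight h s := hh.multisetHeight_add_self hs

theorem apply_one_eq_zero_of_map_mul_eq_self (hh : IsHeight h e) {s : Multiset F} {μ : F}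
    (hs : 1 ∈ s) (hμ : s.map (· * μ) = s) : h 2 ![1, μ] = 0 := by
  have hs0 : s ≠ 0 := ne_of_mem_of_not_mem' hs (Multiset.notMem_zero 1)
  have hsegre := hh.multisetHeight_add_map_mul hs0 μ
  rw [hμ, hh.multisetHeight_add_self hs0] at hsegre
  exact WithBot.eq_zero_of_add_right_eq_self (hh.multisetHeight_ne_bot hs one_ne_zero)
    hsegre.symm

theorem apply_one_zero (hh : IsHeight h e) : h 2 ![(1 : F), 0] = 0 := by
  have hsegre := hh.multisetHeight_add_map_mul (s := {1, 0}) Multiset.cons_ne_zero 0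
  have hadd :
      ({1, 0} : Multiset F) + ({1, 0} : Multiset F).map (· * 0) = 0 ::ₘ 0 ::ₘ {1, 0} := by
    simp only [Multiset.insert_eq_cons, Multiset.map_cons, Multiset.map_singleton, mul_zero]
    rw [add_comm, Multiset.cons_add, Multiset.singleton_add]
  rw [hadd, hh.multisetHeight_cons_of_mem (by simp), hh.multisetHeight_cons_of_mem (by simp)]
    at hsegre
  exact WithBot.eq_zero_of_add_right_eq_self
    (hh.multisetHeight_ne_bot (Multiset.mem_cons_self 1 _) one_ne_zero) hsegre.symm

theorem apply_one_eq_zero_of_isOfFinOrder (hh : IsHeight h e) {μ : F} (hμ : IsOfFinOrder μ) :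
    h 2 ![1, μ] = 0 :=
  let ⟨_, hs, hμs⟩ := hμ.exists_one_mem_map_mul_eq_self
  hh.apply_one_eq_zero_of_map_mul_eq_self hs hμs

theorem multisetHeight_cons_zero (hh : IsHeight h e) {s : Multiset F} (hs : s ≠ 0) :
    multisetHeight h (0 ::ₘ s) = multisetHeight h s := by
  refine le_antisymm ?_ (hh.multisetHeight_mono hs (Multiset.le_cons_self s 0))
  obtain ⟨a, ha⟩ := Multiset.exists_mem_of_ne_zero hs
  have hle : 0 ::ₘ s ≤ s + s.map (· * 0) := by
    rw [← Multiset.singleton_add, add_comm]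
    have h0 : (0 : F) ∈ s.map (· * 0) := Multiset.mem_map.2 ⟨a, ha, mul_zero a⟩
    exact add_le_add_right (Multiset.singleton_le.2 h0) s
  simpa [hh.apply_one_zero] using
    hh.multisetHeight_le_of_le_add_map_mul Multiset.cons_ne_zero hle

theorem multisetHeight_cons_mul_le (hh : IsHeight h e) {μ : F} (hμ : h 2 ![1, μ] = 0) (a : F)
    (s : Multiset F) : multisetHeight h ((μ * a) ::ₘ s) ≤ multisetHeight h (a ::ₘ s) := by
  have hle : (μ * a) ::ₘ s ≤ a ::ₘ s + (a ::ₘ s).map (· * μ) := by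
    rw [Multiset.map_cons, Multiset.add_cons, mul_comm]
    exact Multiset.cons_le_cons _ ((Multiset.le_cons_self s a).trans (Multiset.le_add_right _ _))
  simpa [hμ] using hh.multisetHeight_le_of_le_add_map_mul Multiset.cons_ne_zero hle

theorem multisetHeight_cons_mul (hh : IsHeight h e) {μ : F} (hμ : IsOfFinOrder μ) (a : F)
    (s : Multiset F) : multisetHeight h ((μ * a) ::ₘ s) = multisetHeight h (a ::ₘ s) := by
  refine le_antisymm
    (hh.multisetHeight_cons_mul_le (hh.apply_one_eq_zero_of_isOfFinOrder hμ) a s) ?_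
  have hinv : μ ^ (orderOf μ - 1) * (μ * a) = a := by
    rw [← mul_assoc, pow_sub_one_mul hμ.orderOf_pos.ne', pow_orderOf_eq_one, one_mul]
  simpa only [hinv] using hh.multisetHeight_cons_mul_le
    (hh.apply_one_eq_zero_of_isOfFinOrder (hμ.pow (n := orderOf μ - 1))) (μ * a) s

end IsHeight

/-- A height is invariant under duplication of a coordinate, addition of a zero
coordinate, and multiplication of a coordinate by a root of unity. -/
theorem height_invariance {F : Type*} [Field F]
    (h : ∀ n : ℕ, (Fin n → F) → WithBot ℝ) (e : ℝ) (hh : IsHeight h e)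
    {n : ℕ} (ξ : Fin n → F) (x : F) (lam : F) (hl : ∃ k : ℕ, 0 < k ∧ lam ^ k = 1) :
    h (n + 2) (Fin.append ξ ![x, x]) = h (n + 1) (Fin.append ξ ![x]) ∧
    h (n + 2) (Fin.append ξ ![x, 0]) = h (n + 1) (Fin.append ξ ![x]) ∧
    h (n + 1) (Fin.append ξ ![lam * x]) = h (n + 1) (Fin.append ξ ![x]) := by
  have hS2 (a b : F) : univ.val.map (Fin.append ξ ![a, b]) = a ::ₘ b ::ₘ univ.val.map ξ := by
    rw [Fin.map_univ_val_append, add_comm]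
    rfl
  have hS1 (a : F) : univ.val.map (Fin.append ξ ![a]) = a ::ₘ univ.val.map ξ := by
    rw [Fin.map_univ_val_append, add_comm]
    rfl
  simp only [hh.apply_eq_multisetHeight, hS1, hS2]
  refine ⟨hh.multisetHeight_cons_of_mem (Multiset.mem_cons_self x _), ?_,
    hh.multisetHeight_cons_mul (isOfFinOrder_iff_pow_eq_one.2 hl) x _⟩
  rw [Multiset.cons_swap]
  exact hh.multisetHeight_cons_zero Multiset.cons_ne_zero
end

section
/- Let h be a height on a field F with Archimedean error e. Then for all integers n ≥ 1, m ≥ 1 and all tuples x₁,…,x_n ∈ F^m, one has h(x₁+⋯+x_n) ≤ h(x₁,…,x_n) + log₂(n)·e, where x₁+⋯+x_n denotes the coordinatewise sum and (x₁,…,x_n) the concatenation of the tuples. -/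
/-!
Pairing the summands and applying the triangle inequality once per halving handles `2^k`
summands with loss `k e`. A family of `n` tuples is padded with zero tuples to `2^⌈log₂ n⌉`
members; the padded concatenation is a sub-tuple of `(X, 0) = (1, 0) ⊗ X`, where `X` is the
original concatenation, so padding costs at most the constant `h(1, 0)`. Applied to the `N`-th
Segre powers of the `x_i`, whose sum is the `N`-th Segre power of `x₁+⋯+x_n`, this bounds `N`
times the height defect by `N log₂ n · e + h(1, 0) + e`; dividing by `N` and letting `N → ∞`
gives the claim.
-/

open Function

theorem WithBot.le_of_forall_nsmul_le_nsmul_add {a b : WithBot ℝ} {C : ℝ}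
    (h : ∀ N : ℕ, N • a ≤ N • b + C) : a ≤ b := by
  induction a using WithBot.recBotCoe with
  | bot => exact bot_le
  | coe a =>
  induction b using WithBot.recBotCoe with
  | bot => simpa using h 1
  | coe b =>
  have hN (N : ℕ) : N * a ≤ N * b + C := by
    have := h N
    rw [← WithBot.coe_nsmul, ← WithBot.coe_nsmul, ← WithBot.coe_add, WithBot.coe_le_coe] at this
    simpa [nsmul_eq_mul] using this
  refine WithBot.coe_le_coe.mpr (le_of_not_gt fun hba => ?_)
  obtain ⟨N, hN'⟩ := exists_nat_gt (C / (a - b))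
  have := (div_lt_iff₀ (sub_pos.mpr hba)).mp hN'
  linarith [hN N]

theorem Nat.clog_two_lt_logb_add_one (m : ℕ) : (Nat.clog 2 m : ℝ) < Real.logb 2 m + 1 := by
  rw [← Real.natCeil_logb_natCast]
  rcases m.eq_zero_or_pos with rfl | hm
  · simp
  · exact Nat.ceil_lt_add_one (Real.logb_nonneg one_lt_two (by exact_mod_cast hm))

theorem Nat.two_pow_clog_le_two_mul {n : ℕ} (hn : 0 < n) : 2 ^ Nat.clog 2 n ≤ 2 * n := by
  rcases hk : Nat.clog 2 n with _ | k
  · simp only [pow_zero]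
    omega
  · have := Nat.pow_lt_of_lt_clog (hk ▸ k.lt_add_one : k < Nat.clog 2 n)
    rw [pow_succ]
    omega

/-- The height of a tuple indexed by a finite type, read through an enumeration of the index
type (by permutation invariance, any enumeration gives the same value). -/
noncomputable def indexedHeight {F : Type*} [Field F] (h : ∀ n : ℕ, (Fin n → F) → WithBot ℝ)
    {α : Type*} [Fintype α] (x : α → F) : WithBot ℝ :=
  h (Fintype.card α) (x ∘ (Fintype.equivFin α).symm)

namespace IsHeight

variable {F : Type*} [Field F] {h : ∀ n : ℕ, (Fin n → F) → WithBot ℝ} {e : ℝ}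
  {α β ι κ : Type*} [Fintype α] [Fintype β] [Fintype ι] [Fintype κ]

theorem comp_finEquiv (hh : IsHeight h e) {a b : ℕ} (σ : Fin a ≃ Fin b) (x : Fin b → F) :
    h a (x ∘ σ) = h b x := by
  obtain rfl := Fin.equiv_iff_eq.mp ⟨σ⟩
  exact hh.2.2.2.1 a σ x

theorem indexedHeight_comp_equiv (hh : IsHeight h e) (σ : α ≃ β) (x : β → F) :
    indexedHeight h (x ∘ σ) = indexedHeight h x := by
  have := hh.comp_finEquiv ((Fintype.equivFin α).symm.trans (σ.trans (Fintype.equivFin β)))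
    (x ∘ (Fintype.equivFin β).symm)
  simpa [indexedHeight, Function.comp_def] using this

theorem indexedHeight_fin (hh : IsHeight h e) {n : ℕ} (x : Fin n → F) :
    indexedHeight h x = h n x :=
  hh.comp_finEquiv _ x

theorem indexedHeight_eq_bot_iff (hh : IsHeight h e) [Nonempty α] (x : α → F) :
    indexedHeight h x = ⊥ ↔ x = 0 := by
  rw [indexedHeight, hh.2.1 _ Fintype.card_pos]
  exact (Fintype.equivFin α).symm.surjective.injective_comp_right.eq_iff' rfl

theorem indexedHeight_mul (hh : IsHeight h e) [Nonempty α] [Nonempty β] (x : α → F) (y : β → F) :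
    indexedHeight h (fun p : α × β => x p.1 * y p.2) = indexedHeight h x + indexedHeight h y := by
  rw [← hh.indexedHeight_comp_equiv
    (finProdFinEquiv.symm.trans ((Fintype.equivFin α).prodCongr (Fintype.equivFin β)).symm),
    hh.indexedHeight_fin]
  exact hh.2.2.2.2.1 _ _ Fintype.card_pos Fintype.card_pos
    (x ∘ (Fintype.equivFin α).symm) (y ∘ (Fintype.equivFin β).symm)

theorem indexedHeight_sumElim (hh : IsHeight h e) (x : α → F) (y : β → F) :
    indexedHeight h (Sum.elim x y) = h (Fintype.card α + Fintype.card β)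
      (Fin.append (x ∘ (Fintype.equivFin α).symm) (y ∘ (Fintype.equivFin β).symm)) := by
  rw [← hh.indexedHeight_comp_equiv
    (finSumFinEquiv.symm.trans ((Fintype.equivFin α).sumCongr (Fintype.equivFin β)).symm),
    hh.indexedHeight_fin]
  congr 1
  ext i
  induction i using Fin.addCases <;> simp

theorem indexedHeight_le_sumElim (hh : IsHeight h e) [Nonempty α] (x : α → F) (y : β → F) :
    indexedHeight h x ≤ indexedHeight h (Sum.elim x y) := by
  cases isEmpty_or_nonempty β
  · rw [← hh.indexedHeight_comp_equiv (Equiv.sumEmpty α β).symm]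
    rfl
  · rw [hh.indexedHeight_sumElim]
    exact hh.2.2.2.2.2.1 _ _ Fintype.card_pos Fintype.card_pos _ _

theorem indexedHeight_comp_le (hh : IsHeight h e) [Nonempty α] {f : α → β} (hf : Injective f)
    (z : β → F) : indexedHeight h (z ∘ f) ≤ indexedHeight h z := by
  classical
  let σ : α ⊕ ↥(Set.range f)ᶜ ≃ β :=
    ((Equiv.ofInjective f hf).sumCongr (Equiv.refl _)).trans (Equiv.Set.sumCompl _)
  have hσ : z ∘ σ = Sum.elim (z ∘ f) (z ∘ Subtype.val) := by ext (a | b) <;> rfl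
  rw [← hh.indexedHeight_comp_equiv σ, hσ]
  exact hh.indexedHeight_le_sumElim _ _

theorem indexedHeight_add_le (hh : IsHeight h e) [Nonempty α] (x y : α → F) :
    indexedHeight h (x + y) ≤ indexedHeight h (Sum.elim x y) + e := by
  rw [hh.indexedHeight_sumElim]
  exact hh.2.2.2.2.2.2 _ Fintype.card_pos _ _

theorem indexedHeight_const_one (hh : IsHeight h e) [Unique α] :
    indexedHeight h (fun _ : α => (1 : F)) = 0 := by
  have hsq := hh.indexedHeight_mul (fun _ : α => (1 : F)) (fun _ : α => (1 : F))
  rw [← hh.indexedHeight_comp_equiv (Equiv.prodUnique α α).symm] at hsq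
  simp only [comp_def, mul_one] at hsq
  obtain ⟨r, hr⟩ := WithBot.ne_bot_iff_exists.mp <|
    (hh.indexedHeight_eq_bot_iff (fun _ : α => (1 : F))).not.mpr (one_ne_zero (α := α → F))
  rw [← hr] at hsq ⊢
  have : r = r + r := by exact_mod_cast hsq
  norm_cast
  linarith

theorem indexedHeight_sumElim_zero (hh : IsHeight h e) [Nonempty α] (x : α → F) :
    indexedHeight h (Sum.elim x (0 : α → F)) = h 2 ![1, 0] + indexedHeight h x := by
  rw [← hh.indexedHeight_comp_equiv
      ((finTwoEquiv.prodCongr (Equiv.refl α)).trans (Equiv.boolProdEquivSum α)),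
    ← hh.indexedHeight_fin ![(1 : F), 0], ← hh.indexedHeight_mul]
  congr 1
  ext ⟨i, a⟩
  fin_cases i <;> simp [finTwoEquiv]

theorem indexedHeight_sumElim_zero_le (hh : IsHeight h e) [Nonempty α] (x : α → F)
    (hβ : Fintype.card β ≤ Fintype.card α) :
    indexedHeight h (Sum.elim x (0 : β → F)) ≤ h 2 ![1, 0] + indexedHeight h x := by
  obtain ⟨g⟩ := Function.Embedding.nonempty_of_card_le hβ
  rw [← hh.indexedHeight_sumElim_zero]
  have hg : Sum.elim x (0 : α → F) ∘ Sum.map id g = Sum.elim x 0 := by ext (a | b) <;> rfl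
  rw [← hg]
  exact hh.indexedHeight_comp_le (Sum.map_injective.mpr ⟨injective_id, g.injective⟩) _

theorem indexedHeight_uncurry_sumElim (hh : IsHeight h e) (x : ι → α → F) (y : κ → α → F) :
    indexedHeight h (uncurry (Sum.elim x y)) =
      indexedHeight h (Sum.elim (uncurry x) (uncurry y)) := by
  rw [← hh.indexedHeight_comp_equiv (Equiv.sumProdDistrib ι κ α) (Sum.elim _ _)]
  congr 1
  ext ⟨i | i, a⟩ <;> rfl

theorem indexedHeight_prod_pow (hh : IsHeight h e) [Nonempty α] (x : α → F) (N : ℕ) :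
    indexedHeight h (fun j : Fin N → α => ∏ k, x (j k)) = N • indexedHeight h x := by
  induction N with
  | zero => simpa using hh.indexedHeight_const_one (α := Fin 0 → α)
  | succ N ih =>
    rw [← hh.indexedHeight_comp_equiv (Fin.consEquiv fun _ => α), succ_nsmul', ← ih,
      ← hh.indexedHeight_mul]
    congr 1
    ext ⟨a, j⟩
    simp [Fin.prod_univ_succ]

end IsHeight

def SumHeightBound {F : Type*} [Field F] (h : ∀ n : ℕ, (Fin n → F) → WithBot ℝ)
    (ι α : Type*) [Fintype ι] [Fintype α] (C : WithBot ℝ) : Prop :=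
  ∀ x : ι → α → F, indexedHeight h (∑ i, x i) ≤ indexedHeight h (uncurry x) + C

namespace SumHeightBound

variable {F : Type*} [Field F] {h : ∀ n : ℕ, (Fin n → F) → WithBot ℝ} {e : ℝ}
  {α ι κ : Type*} [Fintype α] [Fintype ι] [Fintype κ] {C : WithBot ℝ}

theorem of_equiv (hh : IsHeight h e) (σ : ι ≃ κ) (hι : SumHeightBound h ι α C) :
    SumHeightBound h κ α C := fun x => by
  simpa [σ.sum_comp] using
    (hι (x ∘ σ)).trans_eq (by rw [← hh.indexedHeight_comp_equiv (σ.prodCongr (Equiv.refl α))]; rfl)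

theorem of_unique (hh : IsHeight h e) [Unique ι] : SumHeightBound h ι α 0 := fun x => by
  rw [Fintype.sum_unique, ← hh.indexedHeight_comp_equiv (Equiv.uniqueProd α ι).symm, add_zero]
  rfl

theorem sumElim_self (hh : IsHeight h e) [Nonempty ι] [Nonempty α] (hι : SumHeightBound h ι α C) :
    SumHeightBound h (ι ⊕ ι) α (e + C) := fun x => by
  obtain ⟨x₁, x₂, rfl⟩ : ∃ x₁ x₂, x = Sum.elim x₁ x₂ := ⟨_, _, (Sum.elim_comp_inl_inr x).symm⟩
  rw [Fintype.sum_sum_type]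
  simp only [Sum.elim_inl, Sum.elim_inr]
  rw [← Finset.sum_add_distrib, hh.indexedHeight_uncurry_sumElim, ← add_assoc]
  exact (hι (x₁ + x₂)).trans (add_le_add_left (hh.indexedHeight_add_le _ _) C)

theorem fin_two_pow (hh : IsHeight h e) [Nonempty α] (k : ℕ) :
    SumHeightBound h (Fin (2 ^ k)) α ((k * e : ℝ) : WithBot ℝ) := by
  induction k with
  | zero => simpa using (of_unique hh (ι := Fin 1)).of_equiv hh (finCongr (pow_zero 2).symm)
  | succ k ih =>
    have hC : (e : WithBot ℝ) + ((k * e : ℝ) : WithBot ℝ) =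
        (((k + 1 : ℕ) * e : ℝ) : WithBot ℝ) := by
      norm_cast
      push_cast
      ring
    rw [← hC]
    exact (ih.sumElim_self hh).of_equiv hh (finSumFinEquiv.trans (finCongr (by ring)))

theorem of_clog (hh : IsHeight h e) [Nonempty ι] [Nonempty α] :
    SumHeightBound h ι α (h 2 ![1, 0] + ((Nat.clog 2 (Fintype.card ι) * e : ℝ) : WithBot ℝ)) :=
    fun x => by
  set k := Nat.clog 2 (Fintype.card ι)
  have hpad : Fintype.card ι + (2 ^ k - Fintype.card ι) = 2 ^ k := by
    have : Fintype.card ι ≤ 2 ^ k := Nat.le_pow_clog one_lt_two _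
    omega
  have hR : 2 ^ k - Fintype.card ι ≤ Fintype.card ι := by
    have : 2 ^ k ≤ 2 * Fintype.card ι := Nat.two_pow_clog_le_two_mul Fintype.card_pos
    omega
  have hpow := (fin_two_pow hh (α := α) k).of_equiv hh
    (Fintype.equivOfCardEq (by simp [hpad]) : Fin (2 ^ k) ≃ ι ⊕ Fin (2 ^ k - Fintype.card ι))
    (Sum.elim x 0)
  rw [Fintype.sum_sum_type, hh.indexedHeight_uncurry_sumElim] at hpow
  simp only [Sum.elim_inl, Sum.elim_inr, Pi.zero_apply, Finset.sum_const_zero, add_zero] at hpow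
  rw [show uncurry (0 : Fin (2 ^ k - Fintype.card ι) → α → F) = 0 from rfl] at hpow
  calc _ ≤ _ := hpow
    _ ≤ h 2 ![1, 0] + indexedHeight h (uncurry x) + ((k * e : ℝ) : WithBot ℝ) := by
      gcongr
      exact hh.indexedHeight_sumElim_zero_le _ (by simpa using Nat.mul_le_mul_right _ hR)
    _ = _ := by abel

end SumHeightBound

namespace IsHeight

variable {F : Type*} [Field F] {h : ∀ n : ℕ, (Fin n → F) → WithBot ℝ} {e : ℝ}
  {α ι : Type*} [Fintype α] [Fintype ι]

theorem nsmul_indexedHeight_sum_le (hh : IsHeight h e) [Nonempty ι] [Nonempty α]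
    (x : ι → α → F) (N : ℕ) :
    N • indexedHeight h (∑ i, x i) ≤ N • indexedHeight h (uncurry x) +
      (h 2 ![1, 0] + ((Nat.clog 2 (Fintype.card ι ^ N) * e : ℝ) : WithBot ℝ)) := by
  let T : (Fin N → ι) → (Fin N → α) → F := fun I j => ∏ k, x (I k) (j k)
  have hsum : ∑ I, T I = fun j => ∏ k, (∑ i, x i) (j k) := by
    ext j
    simp [T, Finset.sum_apply, Fintype.prod_sum]
  have huncurry : uncurry T = (fun J : Fin N → ι × α => ∏ k, uncurry x (J k)) ∘
      (Equiv.arrowProdEquivProdArrow _ _ _).symm := rfl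
  have := SumHeightBound.of_clog hh T
  rwa [hsum, huncurry, hh.indexedHeight_comp_equiv, hh.indexedHeight_prod_pow,
    hh.indexedHeight_prod_pow, Fintype.card_fun, Fintype.card_fin] at this

theorem sumHeightBound (hh : IsHeight h e) [Nonempty ι] [Nonempty α] :
    SumHeightBound h ι α ((Real.logb 2 (Fintype.card ι) * e : ℝ) : WithBot ℝ) := fun x => by
  obtain ⟨c, hc⟩ := WithBot.ne_bot_iff_exists.mp
    ((hh.2.1 2 two_pos _).not.mpr (by simp) : h 2 ![(1 : F), 0] ≠ ⊥)
  refine WithBot.le_of_forall_nsmul_le_nsmul_add (C := c + e) fun N => ?_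
  have hclog :
      Nat.clog 2 (Fintype.card ι ^ N) * e ≤ N • (Real.logb 2 (Fintype.card ι) * e) + e := by
    have hlt := Nat.clog_two_lt_logb_add_one (Fintype.card ι ^ N)
    push_cast at hlt
    rw [Real.logb_pow] at hlt
    rw [nsmul_eq_mul]
    linarith [mul_le_mul_of_nonneg_right hlt.le hh.1]
  calc _ ≤ _ := hh.nsmul_indexedHeight_sum_le x N
    _ ≤ N • indexedHeight h (uncurry x) +
          ((N • (Real.logb 2 (Fintype.card ι) * e) + (c + e) : ℝ) : WithBot ℝ) := by
      rw [← hc, ← WithBot.coe_add]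
      gcongr
      exact WithBot.coe_le_coe.mpr (by linarith)
    _ = _ := by
      rw [WithBot.coe_add, WithBot.coe_nsmul, nsmul_add, add_assoc]

end IsHeight

/-- Generalized triangle inequality: for tuples `x₁,…,x_n ∈ F^m`,
`h(x₁+⋯+x_n) ≤ h(x₁,…,x_n) + log₂(n)·e`, where `(x₁,…,x_n)` is the concatenation
(a tuple of length `n·m`). -/
theorem height_generalized_triangle_inequality {F : Type*} [Field F]
    (h : ∀ n : ℕ, (Fin n → F) → WithBot ℝ) (e : ℝ) (hh : IsHeight h e)
    (n m : ℕ) (hn : 0 < n) (hm : 0 < m) (x : Fin n → Fin m → F) :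
    h m (∑ i, x i) ≤
      h (n * m) (fun k => x (finProdFinEquiv.symm k).1 (finProdFinEquiv.symm k).2) +
        ((Real.logb 2 n * e : ℝ) : WithBot ℝ) := by
  have := Fin.pos_iff_nonempty.mp hn
  have := Fin.pos_iff_nonempty.mp hm
  have key := hh.sumHeightBound x
  rwa [hh.indexedHeight_fin, Fintype.card_fin,
    ← hh.indexedHeight_comp_equiv finProdFinEquiv.symm, hh.indexedHeight_fin] at key
end

section
/- Let K be a number field and let Pl(K) denote the set of places of K (equivalence classes of nontrivial absolute values on K), with each place v carrying the standard normalized absolute value |·|_v (for a finite place v over a prime ideal p, |a|_v = N(p)^{-ord_p(a)}; for a real place, the usual real absolute value under the corresponding embedding; for a complex place, the square of the complex modulus), so that the product formula ∏_{v ∈ Pl(K)} |a|_v = 1 holds for every a ∈ K×. If w : Pl(K) → ℝ_{≥0} is a function such that ∑_{v ∈ Pl(K)} w(v)·log|a|_v = 0 for every a ∈ K× (the sum having only finitely many nonzero terms), then w is constant. -/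
open NumberField IsDedekindDomain

/-- The logarithm of the standard normalized absolute value at a finite place `v` of a
number field `K`: `log |a|_v = -ord_v(a) · log N(v)`, where `N(v)` is the absolute norm
of the prime ideal (and `log |0|_v` is junk `0`). -/
noncomputable def finPlaceLog {K : Type*} [Field K] [NumberField K]
    (v : HeightOneSpectrum (𝓞 K)) (a : K) : ℝ :=
  if h : v.valuation K a = 0 then 0
  else ((Multiplicative.toAdd (WithZero.unzero h) : ℤ) : ℝ) *
    Real.log (Ideal.absNorm v.asIdeal)

/-- The logarithm of the standard normalized absolute value at a place of a number
field `K`: at a finite place over `p`, `|a|_v = N(p)^{-ord_p a}`; at an infinite place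
`i`, it is `(i a)^{mult i}` (the usual absolute value at a real place, the square of the
modulus at a complex place). -/
noncomputable def placeLog {K : Type*} [Field K] [NumberField K]
    (p : HeightOneSpectrum (𝓞 K) ⊕ InfinitePlace K) (a : K) : ℝ :=
  Sum.elim (fun v => finPlaceLog v a) (fun i => (i.mult : ℝ) * Real.log (i a)) p

/-! Units have no finite contribution, so `∑ᵢ wᵢ · log |u|ᵢ = 0` for every unit `u`. By Dirichlet's
unit theorem the logarithmic embedding of the units spans the hyperplane `∑ᵢ xᵢ = 0`, so the
weights of the infinite places all agree, say with `c`. For a finite place `v` and the class number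
`h`, the ideal `vʰ = (α)` is principal, so `v` is the only finite place seen by `α`; as
`log |N α| = h · log N v > 0`, the relation `w v · (-h log N v) + c · log |N α| = 0` forces
`w v = c`. -/

open IsDedekindDomain.HeightOneSpectrum NumberField.HeightOneSpectrum Function

theorem finsum_sum_elim_eq {α β M : Type*} [AddCommMonoid M] [Fintype β] (f : α → M) (g : β → M)
    (hf : (support f).Finite) :
    ∑ᶠ p, Sum.elim f g p = ∑ᶠ a, f a + ∑ b, g b := by
  rw [finsum_eq_sum_of_support_subset (s := hf.toFinset.disjSum Finset.univ), Finset.sum_disjSum,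
    finsum_eq_sum_of_support_subset f (s := hf.toFinset) (by simp)]
  · rfl
  · rintro (a | b) h <;> simp_all

theorem exists_span_singleton_eq_pow_card_classGroup {R : Type*} [CommRing R] [IsDedekindDomain R]
    [Fintype (ClassGroup R)] {I : Ideal R} (hI : I ≠ ⊥) :
    ∃ α : R, Ideal.span {α} = I ^ Fintype.card (ClassGroup R) := by
  have hI₀ : I ∈ nonZeroDivisors (Ideal R) := mem_nonZeroDivisors_of_ne_zero hI
  have hpow : ClassGroup.mk0 (⟨I, hI₀⟩ ^ Fintype.card (ClassGroup R)) = 1 := by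
    rw [map_pow, pow_card_eq_one]
  obtain ⟨α, hα⟩ := ((ClassGroup.mk0_eq_one_iff _).mp hpow).principal
  exact ⟨α, hα.symm⟩

theorem ne_zero_of_span_singleton_eq_pow {R : Type*} [CommRing R] [IsDedekindDomain R]
    {v : HeightOneSpectrum R} {α : R} {n : ℕ} (hα : Ideal.span {α} = v.asIdeal ^ n) : α ≠ 0 := by
  rintro rfl
  exact pow_ne_zero n v.ne_bot (by rw [← hα, Ideal.span_singleton_zero, Ideal.zero_eq_bot])

theorem intValuation_eq_exp_of_span_singleton_eq_pow {R : Type*} [CommRing R]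
    [IsDedekindDomain R] {v : HeightOneSpectrum R} {α : R} {n : ℕ}
    (hα : Ideal.span {α} = v.asIdeal ^ n) :
    v.intValuation α = WithZero.exp (-(n : ℤ)) := by
  rw [intValuation_eq_exp_neg_multiplicity _ (ne_zero_of_span_singleton_eq_pow hα), hα,
    multiplicity_pow_self_of_prime v.prime]

theorem intValuation_eq_one_of_span_singleton_eq_pow {R : Type*} [CommRing R]
    [IsDedekindDomain R] {v q : HeightOneSpectrum R} {α : R} {n : ℕ}
    (hα : Ideal.span {α} = v.asIdeal ^ n) (hq : q ≠ v) :
    q.intValuation α = 1 := by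
  refine intValuation_eq_one_iff.mpr fun hmem => hq ?_
  have hle : v.asIdeal ^ n ≤ q.asIdeal := hα ▸ (Ideal.span_singleton_le_iff_mem _).mpr hmem
  exact HeightOneSpectrum.ext
    (v.isMaximal.eq_of_le q.isPrime.ne_top (q.isPrime.le_of_pow_le hle)).symm

section

variable {K : Type*} [Field K] [NumberField K]

theorem finPlaceLog_eq (v : HeightOneSpectrum (𝓞 K)) (a : K) :
    finPlaceLog v a =
      ((WithZero.log (v.valuation K a) : ℤ) : ℝ) * Real.log (Ideal.absNorm v.asIdeal) := by
  unfold finPlaceLog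
  split_ifs with h
  · simp [h]
  · rw [WithZero.toAdd_unzero_eq_log]

theorem finite_support_finPlaceLog {a : K} (ha : a ≠ 0) :
    (support fun v : HeightOneSpectrum (𝓞 K) => finPlaceLog v a).Finite := by
  refine ((Support.finite (𝓞 K) a).union (Support.finite (𝓞 K) a⁻¹)).subset fun v hv => ?_
  rw [mem_support, finPlaceLog_eq] at hv
  have h1 : v.valuation K a ≠ 1 := fun h => hv (by simp [h])
  rcases h1.lt_or_gt with h | h
  · right
    simp only [Support, Set.mem_ofPred_eq, map_inv₀]
    exact one_lt_inv_iff₀.mpr ⟨by simpa [zero_lt_iff] using ha, h⟩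
  · exact Or.inl h

theorem sum_mult_mul_log_eq_log_abs_norm (a : K) :
    ∑ i : InfinitePlace K, i.mult * Real.log (i a) = Real.log |(Algebra.norm ℚ a : ℝ)| := by
  rcases eq_or_ne a 0 with rfl | ha
  · simp
  · rw [← Rat.cast_abs, ← InfinitePlace.prod_eq_abs_norm,
      Real.log_prod fun i _ => pow_ne_zero _ (InfinitePlace.pos_iff.mpr ha).ne']
    simp only [Real.log_pow]

theorem finsum_mul_placeLog {a : K} (ha : a ≠ 0)
    (w : HeightOneSpectrum (𝓞 K) ⊕ InfinitePlace K → ℝ) :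
    ∑ᶠ p, w p * placeLog p a =
      ∑ᶠ v, w (.inl v) * finPlaceLog v a + ∑ i, w (.inr i) * (i.mult * Real.log (i a)) := by
  have hsplit : (fun p => w p * placeLog p a) = Sum.elim (fun v => w (.inl v) * finPlaceLog v a)
      (fun i => w (.inr i) * (i.mult * Real.log (i a))) := by
    ext (v | i) <;> rfl
  rw [hsplit, finsum_sum_elim_eq]
  exact (finite_support_finPlaceLog ha).subset (support_mul_subset_right _ _)

theorem finPlaceLog_unit_eq_zero (v : HeightOneSpectrum (𝓞 K)) (u : (𝓞 K)ˣ) :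
    finPlaceLog v (u : K) = 0 := by
  have hu : (u : 𝓞 K) ∉ v.asIdeal :=
    fun h => v.isPrime.ne_top (Ideal.eq_top_of_isUnit_mem _ h u.isUnit)
  rw [finPlaceLog_eq, valuation_of_algebraMap,
    intValuation_eq_one_iff.mpr hu, WithZero.log_one, Int.cast_zero, zero_mul]

open NumberField.Units NumberField.Units.dirichletUnitTheorem in
theorem eq_of_forall_units_sum_mul_mult_log_eq_zero (c : InfinitePlace K → ℝ)
    (hc : ∀ u : (𝓞 K)ˣ, ∑ i, c i * (i.mult * Real.log (i u)) = 0) (i j : InfinitePlace K) :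
    c i = c j := by
  classical
  suffices h : ∀ i, c i = c w₀ by rw [h i, h j]
  set φ := Fintype.linearCombination ℝ (fun i : {i : InfinitePlace K // i ≠ w₀} => c i - c w₀)
  have hφ : φ = 0 := by
    refine LinearMap.ext_on (unitLattice_span_eq_top K) ?_
    rintro _ ⟨x, -, rfl⟩
    set g := fun i : InfinitePlace K => (c i - c w₀) * (i.mult * Real.log (i x.toMul))
    calc φ (logEmbedding K x) = g w₀ + ∑ i : {i // i ≠ w₀}, g i.1 := by
          simp [φ, g, Fintype.linearCombination_apply, logEmbedding, mul_comm]
      _ = ∑ i, c i * (i.mult * Real.log (i x.toMul))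
            - c w₀ * ∑ i : InfinitePlace K, i.mult * Real.log (i x.toMul) := by
          rw [← Fintype.sum_eq_add_sum_subtype_ne, Finset.mul_sum, ← Finset.sum_sub_distrib]
          simp only [g, sub_mul]
      _ = 0 := by rw [hc, sum_mult_mul_log, mul_zero, sub_zero]
  intro i
  by_cases hi : i = w₀
  · rw [hi]
  · simpa [φ, sub_eq_zero] using LinearMap.congr_fun hφ (Pi.single ⟨i, hi⟩ 1)

theorem exists_finPlaceLog_supported_at (v : HeightOneSpectrum (𝓞 K)) :
    ∃ a : K, a ≠ 0 ∧ ∃ t : ℝ, 0 < t ∧ finPlaceLog v a = -t ∧ (∀ q ≠ v, finPlaceLog q a = 0) ∧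
      ∑ i : InfinitePlace K, i.mult * Real.log (i a) = t := by
  obtain ⟨α, hα⟩ := exists_span_singleton_eq_pow_card_classGroup v.ne_bot
  refine ⟨α, RingOfIntegers.coe_ne_zero_iff.mpr (ne_zero_of_span_singleton_eq_pow hα),
    Fintype.card (ClassGroup (𝓞 K)) * Real.log (Ideal.absNorm v.asIdeal),
    mul_pos (Nat.cast_pos.mpr Fintype.card_pos) (Real.log_pos (mod_cast one_lt_absNorm v)),
    ?_, fun q hq => ?_, ?_⟩
  · rw [finPlaceLog_eq, valuation_of_algebraMap, intValuation_eq_exp_of_span_singleton_eq_pow hα,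
      WithZero.log_exp]
    push_cast
    ring
  · rw [finPlaceLog_eq, valuation_of_algebraMap,
      intValuation_eq_one_of_span_singleton_eq_pow hα hq, WithZero.log_one, Int.cast_zero, zero_mul]
  · rw [sum_mult_mul_log_eq_log_abs_norm, ← Algebra.coe_norm_int, ← Real.log_pow, ← Nat.cast_pow,
      ← map_pow, ← hα, Ideal.absNorm_span_singleton]
    simp [Nat.cast_natAbs]

end

theorem weights_product_formula_constant_general {K : Type*} [Field K] [NumberField K]
    (w : HeightOneSpectrum (𝓞 K) ⊕ InfinitePlace K → ℝ)
    (hsum : ∀ a : K, a ≠ 0 → ∑ᶠ p, w p * placeLog p a = 0) :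
    ∀ p q, w p = w q := by
  have hsplit (a : K) (ha : a ≠ 0) :
      ∑ᶠ v, w (.inl v) * finPlaceLog v a + ∑ i, w (.inr i) * (i.mult * Real.log (i a)) = 0 :=
    finsum_mul_placeLog ha w ▸ hsum a ha
  have hinf : ∀ i j, w (.inr i) = w (.inr j) :=
    eq_of_forall_units_sum_mul_mult_log_eq_zero _ fun u => by
      simpa [finPlaceLog_unit_eq_zero] using hsplit u (by simp)
  obtain ⟨i₀⟩ : Nonempty (InfinitePlace K) := inferInstance
  have hfin (v : HeightOneSpectrum (𝓞 K)) : w (.inl v) = w (.inr i₀) := by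
    obtain ⟨a, ha, t, ht, hv, hq, ht_inf⟩ := exists_finPlaceLog_supported_at v
    have h := hsplit a ha
    rw [finsum_eq_single _ v fun q hq' => by rw [hq q hq', mul_zero], hv,
      Finset.sum_congr rfl fun i _ => by rw [hinf i i₀], ← Finset.mul_sum, ht_inf] at h
    have h' : (w (.inr i₀) - w (.inl v)) * t = 0 := by linarith
    linarith [(mul_eq_zero.mp h').resolve_right ht.ne']
  have hall : ∀ p, w p = w (.inr i₀) := by
    rintro (v | i)
    exacts [hfin v, hinf i i₀]
  exact fun p q => (hall p).trans (hall q).symm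

/-- If a nonnegative weight function `w` on the places of a number field `K` satisfies
`∑_v w v · log |a|_v = 0` for every `a ∈ K×` (with the standard normalized absolute
values, for which the product formula holds), then `w` is constant. -/
theorem weights_product_formula_constant {K : Type*} [Field K] [NumberField K]
    (w : HeightOneSpectrum (𝓞 K) ⊕ InfinitePlace K → ℝ) (hw : ∀ p, 0 ≤ w p)
    (hsum : ∀ a : K, a ≠ 0 → ∑ᶠ p, w p * placeLog p a = 0) :
    ∀ p q, w p = w q :=
  weights_product_formula_constant_general w hsum
end

section
/- Let K ⊆ F be a finite field extension and let |·| be a pseudo-absolute value on F such that |x| ∈ {0,1,∞} for every x ∈ K. Then |x| ∈ {0,1,∞} for every x ∈ F. -/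
open scoped ENNReal

/-! If `1 < |y| < ∞`, a linear relation among `1, y, …, y^n` over `K`, rescaled so that its
coefficients have values in `{0, 1}`, bounds `|y|` by `n = [F : K]`: isolate the last coefficient
of value `1` and apply the triangle inequality. Applied to the powers of `y` this forces `|y| ≤ 1`
whenever `|y| < ∞`, and then `|y|·|y⁻¹| = 1` leaves only `|y| ∈ {0, 1, ∞}`. The rescaling takes a
coefficient that is maximal for the valuation subring `{c ∈ K : |c| ≤ 1}`. -/

theorem ENNReal.le_one_of_forall_pow_le {a C : ℝ≥0∞} (hC : C ≠ ⊤) (h : ∀ m : ℕ, a ^ m ≤ C) :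
    a ≤ 1 := by
  by_contra! ha
  obtain ⟨m, hm⟩ := ((ENNReal.tendsto_pow_atTop_nhds_top_iff.2 ha).eventually
    (lt_mem_nhds hC.lt_top)).exists
  exact (h m).not_gt hm

theorem ValuationSubring.exists_forall_div_mem {K ι : Type*} [Field K] [Finite ι]
    (A : ValuationSubring K) {a : ι → K} (ha : a ≠ 0) : ∃ j, a j ≠ 0 ∧ ∀ i, a i / a j ∈ A := by
  obtain ⟨i₀, hi₀⟩ := Function.ne_iff.1 ha
  have : Nonempty ι := ⟨i₀⟩
  obtain ⟨j, hj⟩ := Finite.exists_max (A.valuation ∘ a)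
  have haj : a j ≠ 0 := fun h => hi₀ (by simpa [h] using hj i₀)
  refine ⟨j, haj, fun i => (A.valuation_le_one_iff _).1 ?_⟩
  rw [map_div₀, div_le_one₀ (zero_lt_iff.2 (by simpa using haj))]
  exact hj i

namespace IsPseudoAbsValue

section CommRing

variable {R : Type*} [CommRing R] {f : R → ℝ≥0∞}

protected theorem map_zero (hf : IsPseudoAbsValue f) : f 0 = 0 := hf.1

protected theorem map_one (hf : IsPseudoAbsValue f) : f 1 = 1 := hf.2.1

protected theorem map_add_le (hf : IsPseudoAbsValue f) (x y : R) : f (x + y) ≤ f x + f y :=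
  hf.2.2.1 x y

protected theorem map_mul (hf : IsPseudoAbsValue f) {x y : R}
    (h : ¬((f x = 0 ∧ f y = ⊤) ∨ (f x = ⊤ ∧ f y = 0))) : f (x * y) = f x * f y :=
  hf.2.2.2 x y h

theorem map_mul_of_ne_top (hf : IsPseudoAbsValue f) {x y : R} (hx : f x ≠ ⊤) (hy : f y ≠ ⊤) :
    f (x * y) = f x * f y :=
  hf.map_mul (by tauto)

theorem comp {S : Type*} [CommRing S] (hf : IsPseudoAbsValue f) (φ : S →+* R) :
    IsPseudoAbsValue (f ∘ φ) :=
  ⟨by simp [hf.map_zero], by simp [hf.map_one], fun x y => by simpa using hf.map_add_le _ _,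
    fun x y h => by simpa using hf.map_mul h⟩

theorem map_neg_one (hf : IsPseudoAbsValue f) : f (-1) = 1 := by
  have h : f (-1) ^ 2 = 1 ^ 2 := by
    rw [sq, ← hf.map_mul (by rintro (⟨h0, ht⟩ | ⟨ht, h0⟩) <;> simp_all), neg_one_mul, neg_neg,
      hf.map_one, one_pow]
  exact (ENNReal.pow_right_strictMono two_ne_zero).injective h

protected theorem map_neg (hf : IsPseudoAbsValue f) (x : R) : f (-x) = f x := by
  rw [← neg_one_mul, hf.map_mul (by simp [hf.map_neg_one]), hf.map_neg_one, one_mul]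

theorem map_pow_of_ne_top (hf : IsPseudoAbsValue f) {y : R} (hy : f y ≠ ⊤) (m : ℕ) :
    f (y ^ m) = f y ^ m := by
  induction m with
  | zero => simp [hf.map_one]
  | succ m ih => rw [pow_succ, hf.map_mul_of_ne_top (ih ▸ ENNReal.pow_ne_top hy) hy, ih, pow_succ]

theorem map_sum_le (hf : IsPseudoAbsValue f) {ι : Type*} (s : Finset ι) (g : ι → R) :
    f (∑ i ∈ s, g i) ≤ ∑ i ∈ s, f (g i) :=
  Finset.le_sum_of_subadditive f hf.map_zero.le hf.map_add_le s g

theorem map_le_sum_erase_of_sum_eq_zero (hf : IsPseudoAbsValue f) {ι : Type*} [DecidableEq ι]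
    {s : Finset ι} {g : ι → R} (hg : ∑ i ∈ s, g i = 0) {j : ι} (hj : j ∈ s) :
    f (g j) ≤ ∑ i ∈ s.erase j, f (g i) := by
  rw [eq_neg_of_add_eq_zero_left ((Finset.add_sum_erase s g hj).trans hg), hf.map_neg]
  exact hf.map_sum_le _ _

theorem le_of_sum_mul_pow_eq_zero (hf : IsPseudoAbsValue f) {N : ℕ} {b : Fin (N + 1) → R}
    {y : R} (hb : ∀ i, f (b i) = 0 ∨ f (b i) = 1) (hb₁ : ∃ i, f (b i) = 1)
    (hrel : ∑ i, b i * y ^ (i : ℕ) = 0) (hy₁ : 1 ≤ f y) (hy : f y ≠ ⊤) : f y ≤ N := by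
  classical
  obtain ⟨j, hj, hj_max⟩ :=
    Finset.exists_max_image {i | f (b i) = 1} id (by simpa [Finset.Nonempty] using hb₁)
  rw [Finset.mem_filter_univ] at hj
  have hterm (i : Fin (N + 1)) : f (b i * y ^ (i : ℕ)) = f (b i) * f y ^ (i : ℕ) := by
    rw [hf.map_mul_of_ne_top (by rcases hb i with h | h <;> simp [h])
      (hf.map_pow_of_ne_top hy i ▸ ENNReal.pow_ne_top hy), hf.map_pow_of_ne_top hy]
  have hvanish (i : Fin (N + 1)) (hi : j < i) : f (b i * y ^ (i : ℕ)) = 0 := by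
    have : f (b i) ≠ 1 := fun h => (hj_max i (by simpa using h)).not_gt hi
    rw [hterm, (hb i).resolve_right this, zero_mul]
  have hmain : f y ^ (j : ℕ) ≤ ∑ i ∈ Finset.univ.erase j, f (b i * y ^ (i : ℕ)) := by
    simpa [hterm, hj] using hf.map_le_sum_erase_of_sum_eq_zero hrel (Finset.mem_univ j)
  obtain ⟨k, hk⟩ : ∃ k, (j : ℕ) = k + 1 := by
    refine Nat.exists_eq_succ_of_ne_zero fun hj₀ => ?_
    have hsum : ∑ i ∈ Finset.univ.erase j, f (b i * y ^ (i : ℕ)) = 0 :=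
      Finset.sum_eq_zero fun i hi =>
        hvanish i (Fin.lt_def.2 (by have := Fin.val_ne_of_ne (Finset.ne_of_mem_erase hi); omega))
    simp [hj₀, hsum] at hmain
  have hbound : ∀ i ∈ Finset.univ.erase j, f (b i * y ^ (i : ℕ)) ≤ f y ^ k := by
    intro i hi
    rcases lt_or_gt_of_ne (Finset.ne_of_mem_erase hi) with hlt | hgt
    · rw [hterm]
      refine (mul_le_of_le_one_left zero_le ?_).trans
        (pow_le_pow_right₀ hy₁ (by have := Fin.lt_def.1 hlt; omega))
      rcases hb i with h | h <;> simp [h]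
    · simp [hvanish i hgt]
  have hy₀ : f y ≠ 0 := (zero_lt_one.trans_le hy₁).ne'
  refine (ENNReal.mul_le_mul_iff_left (pow_ne_zero k hy₀) (ENNReal.pow_ne_top hy)).1 ?_
  calc f y * f y ^ k = f y ^ (j : ℕ) := by rw [hk, pow_succ']
    _ ≤ ∑ i ∈ Finset.univ.erase j, f (b i * y ^ (i : ℕ)) := hmain
    _ ≤ (Finset.univ.erase j).card • f y ^ k := Finset.sum_le_card_nsmul _ _ _ hbound
    _ = N * f y ^ k := by simp [Finset.card_erase_of_mem, nsmul_eq_mul]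

end CommRing

section Field

variable {K : Type*} [Field K] {f : K → ℝ≥0∞}

theorem map_inv_ne_top (hf : IsPseudoAbsValue f) {x : K} (hx : f x ≠ 0) : f x⁻¹ ≠ ⊤ := by
  intro h
  have hx' : x ≠ 0 := by rintro rfl; exact hx hf.map_zero
  have := hf.map_mul (x := x) (y := x⁻¹) (by simp [hx, h])
  rw [mul_inv_cancel₀ hx', hf.map_one, h, ENNReal.mul_top hx] at this
  exact ENNReal.one_ne_top this

def valuationSubring (hf : IsPseudoAbsValue f) (h : ∀ x, f x ≠ ⊤ → f x ≤ 1) :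
    ValuationSubring K where
  carrier := {x | f x ≤ 1}
  mul_mem' {x y} hx hy := by
    simp only [Set.mem_ofPred_eq] at hx hy ⊢
    rw [hf.map_mul_of_ne_top (ne_top_of_le_ne_top ENNReal.one_ne_top hx)
      (ne_top_of_le_ne_top ENNReal.one_ne_top hy)]
    exact mul_le_one' hx hy
  one_mem' := hf.map_one.le
  add_mem' {x y} hx hy :=
    h _ (ne_top_of_le_ne_top (ENNReal.add_ne_top.2 ⟨ne_top_of_le_ne_top ENNReal.one_ne_top hx,
      ne_top_of_le_ne_top ENNReal.one_ne_top hy⟩) (hf.map_add_le x y))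
  zero_mem' := by simp [hf.map_zero]
  neg_mem' {x} hx := by simpa [hf.map_neg] using hx
  mem_or_inv_mem' x := or_iff_not_imp_left.2 fun hx =>
    h _ (hf.map_inv_ne_top fun h0 => hx (by simp [h0]))

theorem mem_valuationSubring (hf : IsPseudoAbsValue f) (h : ∀ x, f x ≠ ⊤ → f x ≤ 1) {x : K} :
    x ∈ hf.valuationSubring h ↔ f x ≤ 1 :=
  Iff.rfl

theorem map_mem_of_forall_le_one (hf : IsPseudoAbsValue f) (h : ∀ x, f x ≠ ⊤ → f x ≤ 1)
    (x : K) : f x ∈ ({0, 1, ⊤} : Set ℝ≥0∞) := by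
  by_cases hx₀ : f x = 0
  · simp [hx₀]
  by_cases hx : f x = ⊤
  · simp [hx]
  have hinv := hf.map_inv_ne_top hx₀
  have hmul : f x * f x⁻¹ = 1 := by
    rw [← hf.map_mul_of_ne_top hx hinv, mul_inv_cancel₀ fun h0 => hx₀ (by rw [h0, hf.map_zero]),
      hf.map_one]
  have h₁ : 1 ≤ f x := hmul ▸ mul_le_of_le_one_right zero_le (h _ hinv)
  simp [le_antisymm (h x hx) h₁]

end Field

theorem le_max_one_finrank {K F : Type*} [Field K] [Field F] [Algebra K F] [FiniteDimensional K F]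
    {f : F → ℝ≥0∞} (hf : IsPseudoAbsValue f)
    (hK : ∀ x : K, f (algebraMap K F x) ∈ ({0, 1, ⊤} : Set ℝ≥0∞)) {y : F} (hy : f y ≠ ⊤) :
    f y ≤ max 1 (Module.finrank K F : ℝ≥0∞) := by
  rcases le_or_gt (f y) 1 with hy₁ | hy₁
  · exact le_max_of_le_left hy₁
  refine le_max_of_le_right ?_
  have hdep : ¬LinearIndependent K fun i : Fin (Module.finrank K F + 1) => y ^ (i : ℕ) :=
    fun h => by simpa using h.fintype_card_le_finrank
  obtain ⟨a, hrel, ha⟩ := Fintype.not_linearIndependent_iff.1 hdep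
  have hK' (c : K) : (f ∘ algebraMap K F) c ≠ ⊤ → (f ∘ algebraMap K F) c ≤ 1 := by
    obtain h | h | h : f (algebraMap K F c) = 0 ∨ _ = 1 ∨ _ = ⊤ := hK c <;> simp [h]
  let A := (hf.comp (algebraMap K F)).valuationSubring hK'
  obtain ⟨j, haj, hA⟩ := A.exists_forall_div_mem (Function.ne_iff.2 ha)
  refine hf.le_of_sum_mul_pow_eq_zero (b := fun i => algebraMap K F (a i / a j)) (fun i => ?_)
    ⟨j, by simp [haj, hf.map_one]⟩ ?_ hy₁.le hy
  · have hle : f (algebraMap K F (a i / a j)) ≤ 1 := (mem_valuationSubring _ hK').1 (hA i)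
    obtain h | h | h : f (algebraMap K F (a i / a j)) = 0 ∨ _ = 1 ∨ _ = ⊤ := hK (a i / a j)
    exacts [.inl h, .inr h, absurd (h ▸ hle) (by simp)]
  · calc ∑ i, algebraMap K F (a i / a j) * y ^ (i : ℕ)
        = (∑ i, a i • y ^ (i : ℕ)) * algebraMap K F (a j)⁻¹ := by
          simp [Finset.sum_mul, Algebra.smul_def, div_eq_mul_inv, mul_right_comm]
      _ = 0 := by rw [hrel, zero_mul]

end IsPseudoAbsValue

/-- If a pseudo-absolute value on a finite field extension `F` of `K` takes only the
values `{0,1,∞}` on `K`, then it takes only the values `{0,1,∞}` on all of `F`. -/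
theorem pseudoAbsValue_trivial_of_trivial_on_base {K F : Type*} [Field K] [Field F]
    [Algebra K F] [FiniteDimensional K F]
    (f : F → ℝ≥0∞) (hf : IsPseudoAbsValue f)
    (hK : ∀ x : K, f (algebraMap K F x) ∈ ({0, 1, ⊤} : Set ℝ≥0∞)) :
    ∀ x : F, f x ∈ ({0, 1, ⊤} : Set ℝ≥0∞) := by
  refine hf.map_mem_of_forall_le_one fun y hy => ?_
  refine ENNReal.le_one_of_forall_pow_le (C := max 1 (Module.finrank K F : ℝ≥0∞)) (by simp)
    fun m => ?_
  rw [← hf.map_pow_of_ne_top hy]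
  exact hf.le_max_one_finrank hK (hf.map_pow_of_ne_top hy m ▸ ENNReal.pow_ne_top hy)
end

section
/- Let G be a finite group acting by homeomorphisms on a locally compact Hausdorff topological space X, let Y = X/G be the orbit space with the quotient topology and r : X → Y the quotient map, and assume Y is locally compact Hausdorff. Let ν be a Radon measure on Y. Then there exists a unique G-invariant Radon measure μ on X such that the pushforward r_*μ equals ν. -/
/-! An invariant lift `μ` of `ν` is pinned down on compact sets: if `f_K [x]` is the proportion
of `g ∈ G` with `g • x ∈ K`, then `∫ f_K dν = ∫ f_K ∘ r dμ = |G|⁻¹ ∑ g, μ (g⁻¹ • K) = μ K`,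
and regular measures agreeing on compact sets are equal. Conversely `K ↦ ∫ f_K dν` is a
`G`-invariant content on `X`. Since `G` is finite, the quotient map `r` is closed and proper,
so inner regularity of `ν` shows that the induced measure gives `r⁻¹ U` mass `ν U` for open `U`,
and outer regularity extends this to `r_* μ = ν`. -/

open MeasureTheory Set TopologicalSpace ENNReal Pointwise

theorem Topology.IsQuotientMap.upperSemicontinuous_of_comp {X Y γ : Type*} [TopologicalSpace X]
    [TopologicalSpace Y] [Preorder γ] {f : X → Y} (hf : IsQuotientMap f) {φ : Y → γ}
    (h : UpperSemicontinuous (φ ∘ f)) : UpperSemicontinuous φ :=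
  upperSemicontinuous_iff_isOpen_preimage.2 fun t => hf.isOpen_preimage.1 (h.isOpen_preimage t)

theorem MeasureTheory.Measure.OuterRegular.map_of_isClosedMap {α β : Type*} [MeasurableSpace α]
    [TopologicalSpace α] [OpensMeasurableSpace α] [MeasurableSpace β] [TopologicalSpace β]
    [BorelSpace β] {f : α → β} (hf : Continuous f) (hf' : IsClosedMap f) (μ : Measure α)
    [μ.OuterRegular] : (μ.map f).OuterRegular := by
  refine ⟨fun A hA r hr => ?_⟩
  rw [Measure.map_apply hf.measurable hA] at hr
  obtain ⟨V, hAV, hV, hμV⟩ := Set.exists_isOpen_lt_of_lt _ r hr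
  have hU : IsOpen (f '' Vᶜ)ᶜ := (hf' _ hV.isClosed_compl).isOpen_compl
  have hUV : f ⁻¹' (f '' Vᶜ)ᶜ ⊆ V := fun x hx => by_contra fun hxV => hx ⟨x, hxV, rfl⟩
  refine ⟨(f '' Vᶜ)ᶜ, ?_, hU, ?_⟩
  · rintro _ hy ⟨x, hxV, rfl⟩
    exact hxV (hAV hy)
  · rw [Measure.map_apply hf.measurable hU.measurableSet]
    exact (measure_mono hUV).trans_lt hμV

theorem MeasureTheory.Measure.Regular.ext_isCompact {α : Type*} [MeasurableSpace α]
    [TopologicalSpace α] {μ ν : Measure α} [μ.Regular] [ν.Regular]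
    (h : ∀ K, IsCompact K → μ K = ν K) : μ = ν :=
  Measure.OuterRegular.ext_isOpen fun _ hU =>
    Measure.Regular.innerRegular.eq_of_innerRegularWRT_of_forall_eq
      Measure.Regular.innerRegular h hU

namespace MulAction

variable {G X : Type*} [Group G] [MulAction G X]

section Finite

variable [Finite G] [TopologicalSpace X] [ContinuousConstSMul G X]

theorem isClosedMap_quotientMk_of_finite : IsClosedMap (Quotient.mk (orbitRel G X)) := by
  intro t ht
  rw [← isOpenQuotientMap_quotientMk.isQuotientMap.isClosed_preimage,
    show Quotient.mk (orbitRel G X) ⁻¹' (Quotient.mk _ '' t) = _ from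
      quotient_preimage_image_eq_union_mul t]
  exact isClosed_iUnion_of_finite fun g => isClosedMap_smul g t ht

theorem isProperMap_quotientMk_of_finite : IsProperMap (Quotient.mk (orbitRel G X)) := by
  refine isProperMap_iff_isClosedMap_and_compact_fibers.2
    ⟨isOpenQuotientMap_quotientMk.continuous, isClosedMap_quotientMk_of_finite, fun y => ?_⟩
  obtain ⟨x, rfl⟩ := Quotient.exists_rep y
  refine ((finite_range fun g : G => g • x).subset fun z hz => ?_).isCompact
  exact Quotient.exact hz

end Finite

section OrbitAverage

variable [Fintype G]

variable (G) in
noncomputable def orbitAverage (A : Set X) (x : X) : ℝ≥0∞ :=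
  (Fintype.card G : ℝ≥0∞)⁻¹ * ∑ g : G, A.indicator 1 (g • x)

theorem orbitAverage_smul (A : Set X) (g : G) (x : X) :
    orbitAverage G A (g • x) = orbitAverage G A x := by
  simp only [orbitAverage, smul_smul]
  congr 1
  exact Fintype.sum_equiv (Equiv.mulRight g) _ _ fun _ => rfl

theorem orbitAverage_image_smul (A : Set X) (g : G) (x : X) :
    orbitAverage G ((g • ·) '' A) x = orbitAverage G A x := by
  simp only [orbitAverage, image_smul]
  congr 1
  refine Fintype.sum_equiv (Equiv.mulLeft g⁻¹) _ _ fun h => ?_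
  classical
  rw [Equiv.coe_mulLeft, mul_smul, indicator_apply, indicator_apply,
    mem_smul_set_iff_inv_smul_mem, Pi.one_apply, Pi.one_apply]

theorem orbitAverage_mono {A B : Set X} (h : A ⊆ B) (x : X) :
    orbitAverage G A x ≤ orbitAverage G B x := by
  unfold orbitAverage
  gcongr with g

theorem orbitAverage_union {A B : Set X} (h : Disjoint A B) (x : X) :
    orbitAverage G (A ∪ B) x = orbitAverage G A x + orbitAverage G B x := by
  simp only [orbitAverage, indicator_union_of_disjoint h, Finset.sum_add_distrib, mul_add]

theorem orbitAverage_union_le (A B : Set X) (x : X) :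
    orbitAverage G (A ∪ B) x ≤ orbitAverage G A x + orbitAverage G B x := by
  rw [← union_sdiff_self, orbitAverage_union disjoint_sdiff_right]
  gcongr
  exact orbitAverage_mono sdiff_subset x

theorem orbitAverage_le_one (A : Set X) (x : X) : orbitAverage G A x ≤ 1 := by
  calc orbitAverage G A x ≤ (Fintype.card G : ℝ≥0∞)⁻¹ * ∑ _g : G, 1 := by
        unfold orbitAverage
        gcongr with g
        exact indicator_apply_le' (fun _ => le_rfl) fun _ => zero_le
    _ = 1 := by simp [ENNReal.inv_mul_cancel]

theorem orbitAverage_le_indicator {A : Set X} {U : Set (Quotient (orbitRel G X))}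
    (h : A ⊆ Quotient.mk _ ⁻¹' U) (x : X) :
    orbitAverage G A x ≤ U.indicator 1 (Quotient.mk _ x) := by
  by_cases hx : Quotient.mk _ x ∈ U
  · simpa [hx] using orbitAverage_le_one A x
  · have : ∀ g : G, g • x ∉ A := fun g hg => hx (by simpa using h hg)
    simp [orbitAverage, hx, this]

theorem orbitAverage_preimage (L : Set (Quotient (orbitRel G X))) (x : X) :
    orbitAverage G (Quotient.mk _ ⁻¹' L) x = L.indicator 1 (Quotient.mk _ x) := by
  by_cases hx : Quotient.mk _ x ∈ L
  · simp [orbitAverage, hx, ENNReal.inv_mul_cancel]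
  · simp [orbitAverage, hx]

theorem upperSemicontinuous_orbitAverage [TopologicalSpace X] [ContinuousConstSMul G X]
    {A : Set X} (hA : IsClosed A) : UpperSemicontinuous (orbitAverage G A) :=
  (ENNReal.continuous_const_mul (by simp)).comp_upperSemicontinuous
    (upperSemicontinuous_sum fun g _ =>
      (hA.upperSemicontinuous_indicator zero_le_one).comp (continuous_const_smul g))
    fun _ _ h => mul_le_mul_right h _

theorem lintegral_orbitAverage [MeasurableSpace X] [MeasurableConstSMul G X] {μ : Measure X}
    (hμ : ∀ g : G, μ.map (g • ·) = μ) {A : Set X} (hA : MeasurableSet A) :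
    ∫⁻ x, orbitAverage G A x ∂μ = μ A := by
  have hmeas (g : G) : Measurable fun x => A.indicator (1 : X → ℝ≥0∞) (g • x) :=
    (measurable_one.indicator hA).comp (measurable_const_smul g)
  have hterm (g : G) : ∫⁻ x, A.indicator 1 (g • x) ∂μ = μ A := by
    rw [← lintegral_map (measurable_one.indicator hA) (measurable_const_smul g), hμ g,
      lintegral_indicator_one hA]
  unfold orbitAverage
  rw [lintegral_const_mul' _ _ (by simp), lintegral_finsetSum _ fun g _ => hmeas g]
  simp [hterm, ← mul_assoc, ENNReal.inv_mul_cancel]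

variable (G) in
noncomputable def quotientOrbitAverage (A : Set X) : Quotient (orbitRel G X) → ℝ≥0∞ :=
  Quotient.lift (orbitAverage G A) fun _ _ ⟨g, hg⟩ => hg ▸ orbitAverage_smul A g _

theorem lintegral_quotientOrbitAverage_le [MeasurableSpace (Quotient (orbitRel G X))]
    (ν : Measure (Quotient (orbitRel G X))) {K : Set X} {U : Set (Quotient (orbitRel G X))}
    (hU : MeasurableSet U) (hKU : K ⊆ Quotient.mk _ ⁻¹' U) :
    ∫⁻ y, quotientOrbitAverage G K y ∂ν ≤ ν U :=
  (lintegral_mono fun y => y.inductionOn (orbitAverage_le_indicator hKU)).trans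
    (lintegral_indicator_one hU).le

theorem lintegral_quotientOrbitAverage_preimage [MeasurableSpace (Quotient (orbitRel G X))]
    (ν : Measure (Quotient (orbitRel G X))) {L : Set (Quotient (orbitRel G X))}
    (hL : MeasurableSet L) : ∫⁻ y, quotientOrbitAverage G (Quotient.mk _ ⁻¹' L) y ∂ν = ν L := by
  rw [← lintegral_indicator_one hL]
  exact lintegral_congr fun y => y.inductionOn (orbitAverage_preimage L)

end OrbitAverage

section Lift

variable [Fintype G] [TopologicalSpace X] [ContinuousConstSMul G X]
  [MeasurableSpace (Quotient (orbitRel G X))] [BorelSpace (Quotient (orbitRel G X))]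

theorem measurable_quotientOrbitAverage {K : Set X} (hK : IsClosed K) :
    Measurable (quotientOrbitAverage G K) :=
  (isOpenQuotientMap_quotientMk.isQuotientMap.upperSemicontinuous_of_comp
    (upperSemicontinuous_orbitAverage hK)).measurable

section Uniqueness

variable [MeasurableSpace X] [BorelSpace X]

theorem lintegral_quotientOrbitAverage_map {μ : Measure X} (hμ : ∀ g : G, μ.map (g • ·) = μ)
    {K : Set X} (hK : IsClosed K) :
    ∫⁻ y, quotientOrbitAverage G K y ∂(μ.map (Quotient.mk _)) = μ K := by
  rw [lintegral_map (measurable_quotientOrbitAverage hK)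
    isOpenQuotientMap_quotientMk.continuous.measurable]
  exact lintegral_orbitAverage hμ hK.measurableSet

theorem eq_of_map_quotientMk_eq [T2Space X] {μ₁ μ₂ : Measure X} [μ₁.Regular] [μ₂.Regular]
    (h₁ : ∀ g : G, μ₁.map (g • ·) = μ₁) (h₂ : ∀ g : G, μ₂.map (g • ·) = μ₂)
    (h : μ₁.map (Quotient.mk (orbitRel G X)) = μ₂.map (Quotient.mk _)) : μ₁ = μ₂ :=
  Measure.Regular.ext_isCompact fun K hK => by
    rw [← lintegral_quotientOrbitAverage_map h₁ hK.isClosed, h,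
      lintegral_quotientOrbitAverage_map h₂ hK.isClosed]

end Uniqueness

variable [T2Space X] (ν : Measure (Quotient (orbitRel G X)))

theorem lintegral_quotientOrbitAverage_ne_top [IsFiniteMeasureOnCompacts ν] {K : Set X}
    (hK : IsCompact K) : ∫⁻ y, quotientOrbitAverage G K y ∂ν ≠ ∞ :=
  ((lintegral_quotientOrbitAverage_le ν
      (isClosedMap_quotientMk_of_finite _ hK.isClosed).measurableSet
      (subset_preimage_image _ _)).trans_lt
    (hK.image isOpenQuotientMap_quotientMk.continuous).measure_lt_top).ne

variable (G) in
noncomputable def liftContent [IsFiniteMeasureOnCompacts ν] : Content X where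
  toFun K := (∫⁻ y, quotientOrbitAverage G K y ∂ν).toNNReal
  mono' K₁ K₂ h := toNNReal_mono (lintegral_quotientOrbitAverage_ne_top ν K₂.isCompact)
    (lintegral_mono fun y => y.inductionOn (orbitAverage_mono h))
  sup_disjoint' K₁ K₂ h _ hK₂ := by
    rw [Compacts.coe_sup, ← toNNReal_add (lintegral_quotientOrbitAverage_ne_top ν K₁.isCompact)
      (lintegral_quotientOrbitAverage_ne_top ν K₂.isCompact),
      ← lintegral_add_right _ (measurable_quotientOrbitAverage hK₂)]
    exact congrArg _ (lintegral_congr fun y => y.inductionOn (orbitAverage_union h))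
  sup_le' K₁ K₂ := by
    have h₁ := lintegral_quotientOrbitAverage_ne_top ν K₁.isCompact
    have h₂ := lintegral_quotientOrbitAverage_ne_top ν K₂.isCompact
    rw [Compacts.coe_sup, ← toNNReal_add h₁ h₂]
    refine toNNReal_mono (add_ne_top.2 ⟨h₁, h₂⟩) ?_
    rw [← lintegral_add_right _ (measurable_quotientOrbitAverage K₂.isCompact.isClosed)]
    exact lintegral_mono fun y => y.inductionOn (orbitAverage_union_le _ _)

theorem liftContent_apply [IsFiniteMeasureOnCompacts ν] (K : Compacts X) :
    liftContent G ν K = ∫⁻ y, quotientOrbitAverage G K y ∂ν :=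
  coe_toNNReal (lintegral_quotientOrbitAverage_ne_top ν K.isCompact)

variable [MeasurableSpace X] [BorelSpace X]

theorem map_smul_liftContent_measure [IsFiniteMeasureOnCompacts ν] (g : G) :
    (liftContent G ν).measure.map (g • ·) = (liftContent G ν).measure := by
  ext s hs
  rw [Measure.map_apply (measurable_const_smul g) hs,
    Content.measure_apply _ (measurable_const_smul g hs), Content.measure_apply _ hs]
  refine Content.outerMeasure_preimage _ (Homeomorph.smul g) (fun K => ?_) s
  rw [liftContent_apply, liftContent_apply, Compacts.coe_map]
  exact lintegral_congr fun y => y.inductionOn (orbitAverage_image_smul (K : Set X) g)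

theorem liftContent_measure_preimage_of_isOpen [ν.Regular] {U : Set (Quotient (orbitRel G X))}
    (hU : IsOpen U) : (liftContent G ν).measure (Quotient.mk _ ⁻¹' U) = ν U := by
  have hU' : IsOpen (Quotient.mk (orbitRel G X) ⁻¹' U) :=
    hU.preimage isOpenQuotientMap_quotientMk.continuous
  rw [Content.measure_apply _ hU'.measurableSet, Content.outerMeasure_of_isOpen _ _ hU']
  refine le_antisymm (iSup₂_le fun K hKU => ?_) ?_
  · rw [liftContent_apply]
    exact lintegral_quotientOrbitAverage_le ν hU.measurableSet hKU
  · rw [Measure.Regular.innerRegular.measure_eq_iSup hU]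
    refine iSup₂_le fun L hLU => iSup_le fun hL => ?_
    have hL' : IsCompact (Quotient.mk (orbitRel G X) ⁻¹' L) :=
      (isProperMap_quotientMk_of_finite (G := G)).isCompact_preimage hL
    have hLc : IsClosed L := by
      simpa [image_preimage_eq L isOpenQuotientMap_quotientMk.surjective] using
        isClosedMap_quotientMk_of_finite (G := G) _ hL'.isClosed
    calc ν L = liftContent G ν ⟨_, hL'⟩ := by
          rw [liftContent_apply, Compacts.coe_mk,
            lintegral_quotientOrbitAverage_preimage ν hLc.measurableSet]
      _ ≤ (liftContent G ν).innerContent ⟨_, hU'⟩ :=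
          Content.le_innerContent _ _ _ fun _ hx => hLU hx

theorem map_quotientMk_liftContent_measure [ν.Regular] :
    (liftContent G ν).measure.map (Quotient.mk _) = ν := by
  have := Measure.OuterRegular.map_of_isClosedMap isOpenQuotientMap_quotientMk.continuous
    (isClosedMap_quotientMk_of_finite (G := G)) (liftContent G ν).measure
  refine Measure.OuterRegular.ext_isOpen fun U hU => ?_
  rw [Measure.map_apply isOpenQuotientMap_quotientMk.continuous.measurable hU.measurableSet,
    liftContent_measure_preimage_of_isOpen ν hU]

end Lift

end MulAction

open MulAction in
theorem existsUnique_invariant_radon_lift_general {G X : Type*} [Group G] [Finite G]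
    [TopologicalSpace X] [LocallyCompactSpace X] [T2Space X]
    [MulAction G X] [ContinuousConstSMul G X]
    [MeasurableSpace X] [BorelSpace X]
    [MeasurableSpace (Quotient (MulAction.orbitRel G X))]
    [BorelSpace (Quotient (MulAction.orbitRel G X))]
    (ν : Measure (Quotient (MulAction.orbitRel G X))) (hν : ν.Regular) :
    ∃! μ : Measure X, μ.Regular ∧ (∀ g : G, μ.map (g • ·) = μ) ∧
      μ.map (Quotient.mk (MulAction.orbitRel G X)) = ν := by
  have := Fintype.ofFinite G
  refine ⟨(liftContent G ν).measure,
    ⟨inferInstance, map_smul_liftContent_measure ν, map_quotientMk_liftContent_measure ν⟩, ?_⟩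
  rintro μ ⟨hμ, hμG, hμν⟩
  exact eq_of_map_quotientMk_eq hμG (map_smul_liftContent_measure ν)
    (hμν.trans (map_quotientMk_liftContent_measure ν).symm)

/-- Let a finite group `G` act by homeomorphisms on a locally compact Hausdorff space
`X`, with locally compact Hausdorff orbit space `Y = X/G` (with the quotient topology)
and quotient map `r : X → Y`. Every Radon measure `ν` on `Y` lifts to a unique
`G`-invariant Radon measure `μ` on `X` with `r_*μ = ν`. -/
theorem existsUnique_invariant_radon_lift {G X : Type*} [Group G] [Finite G]
    [TopologicalSpace X] [LocallyCompactSpace X] [T2Space X]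
    [MulAction G X] [ContinuousConstSMul G X]
    [MeasurableSpace X] [BorelSpace X]
    [LocallyCompactSpace (Quotient (MulAction.orbitRel G X))]
    [T2Space (Quotient (MulAction.orbitRel G X))]
    [MeasurableSpace (Quotient (MulAction.orbitRel G X))]
    [BorelSpace (Quotient (MulAction.orbitRel G X))]
    (ν : Measure (Quotient (MulAction.orbitRel G X))) (hν : ν.Regular) :
    ∃! μ : Measure X, μ.Regular ∧ (∀ g : G, μ.map (g • ·) = μ) ∧
      μ.map (Quotient.mk (MulAction.orbitRel G X)) = ν :=
  existsUnique_invariant_radon_lift_general ν hν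
end
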